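/- arXiv:1702.03486 — 6 statements merged into one kernel-verified Lean document; each statement's English description precedes it below -/
import Mathlib

section
/- Let φ be a nonnegative function in L¹(0,∞) and let Φ be a Schwartz function on ℝ with ∫_ℝ Φ(x) dx ≠ 0. Then for every f ∈ L¹(ℝ) with ∫_ℝ M_Φ f(x) dx < ∞, the function ℋ_φ f belongs to L¹(ℝ) and ∫_ℝ M_Φ(ℋ_φ f)(x) dx ≤ (∫₀^∞ φ(t) dt) · ∫_ℝ M_Φ f(x) dx. In particular the Hausdorff operator ℋ_φ is bounded on the real Hardy space H¹(ℝ) with operator norm at most ∫₀^∞ φ(t) dt. -/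
open MeasureTheory Set
open scoped ENNReal

/-- The Hausdorff operator `ℋ_φ f (x) = ∫₀^∞ f(x/t) φ(t)/t dt`. -/
noncomputable def hausdorffOp (φ f : ℝ → ℝ) (x : ℝ) : ℝ :=
  ∫ t in Set.Ioi (0 : ℝ), f (x / t) * (φ t / t)

/-- The smooth maximal function `M_Φ f (x) = sup_{t>0} |(f * Φ_t)(x)|`,
where `Φ_t(x) = t⁻¹ Φ(x/t)`, valued in `ℝ≥0∞`. -/
noncomputable def smoothMax (Φ : SchwartzMap ℝ ℝ) (f : ℝ → ℝ) (x : ℝ) : ℝ≥0∞ :=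
  ⨆ t : {t : ℝ // 0 < t},
    ENNReal.ofReal |∫ y, f y * ((t : ℝ)⁻¹ * Φ ((x - y) / (t : ℝ)))|

namespace HausdorffAux

/-- The convolution `f * Φ_t (x)`. -/
noncomputable def G (Φ : SchwartzMap ℝ ℝ) (g : ℝ → ℝ) (t x : ℝ) : ℝ :=
  ∫ y, g y * (t⁻¹ * Φ ((x - y) / t))

lemma smoothMax_eq (Φ : SchwartzMap ℝ ℝ) (g : ℝ → ℝ) (x : ℝ) :
    smoothMax Φ g x = ⨆ t : {t : ℝ // 0 < t}, ENNReal.ofReal |G Φ g (t : ℝ) x| := rfl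

/-- Scaling for lintegrals on ℝ. -/
lemma lint_scale (h : ℝ → ℝ≥0∞) (hh : Measurable h) {t : ℝ} (ht : 0 < t) :
    ∫⁻ x, h (x / t) = ENNReal.ofReal t * ∫⁻ x, h x := by
  have h1 : (fun x : ℝ => h (x / t)) = fun x => h (t⁻¹ * x) := by
    funext x; rw [div_eq_inv_mul]
  rw [h1, ← lintegral_map hh (measurable_const_mul t⁻¹),
    Real.map_volume_mul_left (inv_ne_zero ht.ne'), lintegral_smul_measure, inv_inv,
    abs_of_pos ht, smul_eq_mul]

variable (Φ : SchwartzMap ℝ ℝ)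

/-- Bound for Schwartz function. -/
lemma Phi_bound : ∀ x : ℝ, ‖Φ x‖ ≤ (SchwartzMap.seminorm ℝ 0 0) Φ := fun x =>
  Φ.norm_le_seminorm ℝ x

/-- Continuity in x of `G Φ g t ·`. -/
lemma G_continuous_x {g : ℝ → ℝ} (hg : Integrable g) {t : ℝ} (ht : 0 < t) :
    Continuous (fun x => G Φ g t x) := by
  apply continuous_of_dominated (bound := fun y => ‖g y‖ * (t⁻¹ * (SchwartzMap.seminorm ℝ 0 0) Φ))
  · intro x
    exact hg.1.mul ((continuous_const.mul (Φ.continuous.comp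
      (by continuity))).aestronglyMeasurable)
  · intro x
    filter_upwards with y
    rw [norm_mul, norm_mul, norm_inv, Real.norm_eq_abs t, abs_of_pos ht]
    exact mul_le_mul_of_nonneg_left
      (mul_le_mul_of_nonneg_left (HausdorffAux.Phi_bound Φ _) (inv_nonneg.2 ht.le))
      (norm_nonneg _)
  · exact (hg.norm).mul_const _
  · filter_upwards with y
    exact continuous_const.mul (continuous_const.mul (Φ.continuous.comp (by continuity)))

/-- Continuity in t of `G Φ g · x` at positive t. -/
lemma G_continuous_t {g : ℝ → ℝ} (hg : Integrable g) (x : ℝ) {t₀ : ℝ} (ht₀ : 0 < t₀) :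
    ContinuousAt (fun t => G Φ g t x) t₀ := by
  apply continuousAt_of_dominated
    (bound := fun y => ‖g y‖ * ((2 / t₀) * (SchwartzMap.seminorm ℝ 0 0) Φ))
  · filter_upwards with t
    exact hg.1.mul ((continuous_const.mul (Φ.continuous.comp
      (by continuity))).aestronglyMeasurable)
  · have hmem : Ioi (t₀ / 2) ∈ nhds t₀ := Ioi_mem_nhds (by linarith)
    filter_upwards [hmem] with t ht
    filter_upwards with y
    have ht2 : (0 : ℝ) < t₀ / 2 := by linarith
    have htpos : 0 < t := lt_trans ht2 ht
    have h1 : t⁻¹ ≤ 2 / t₀ := by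
      have := inv_anti₀ ht2 ht.le
      rwa [inv_div] at this
    rw [norm_mul, norm_mul, norm_inv, Real.norm_eq_abs t, abs_of_pos htpos]
    exact mul_le_mul_of_nonneg_left
      (mul_le_mul h1 (HausdorffAux.Phi_bound Φ _) (norm_nonneg _) (by positivity))
      (norm_nonneg _)
  · exact (hg.norm).mul_const _
  · filter_upwards with y
    have h1 : ContinuousAt (fun t : ℝ => t⁻¹) t₀ := continuousAt_inv₀ ht₀.ne'
    have h2 : ContinuousAt (fun t : ℝ => Φ ((x - y) / t)) t₀ :=
      Φ.continuous.continuousAt.comp ((continuousAt_const).div continuousAt_id ht₀.ne')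
    exact continuousAt_const.mul (h1.mul h2)

/-- smoothMax as countable sup over rationals. -/
lemma smoothMax_rat {g : ℝ → ℝ} (hg : Integrable g) (x : ℝ) :
    smoothMax Φ g x = ⨆ q : {q : ℚ // 0 < q}, ENNReal.ofReal |G Φ g (q : ℝ) x| := by
  rw [smoothMax_eq]
  apply le_antisymm
  · apply iSup_le
    rintro ⟨t, ht⟩
    -- choose rationals qₙ ∈ (t, t + 1/(n+1))
    have hch : ∀ n : ℕ, ∃ q : ℚ, t < q ∧ (q : ℝ) < t + 1 / (n + 1) := by
      intro n
      exact_mod_cast exists_rat_btwn (lt_add_of_pos_right t (by positivity) : t < t + 1 / ((n : ℝ) + 1))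
    choose u hu1 hu2 using hch
    have hupos : ∀ n, 0 < u n := fun n => by exact_mod_cast ht.trans (hu1 n)
    have htend : Filter.Tendsto (fun n : ℕ => ((u n : ℝ))) Filter.atTop (nhds t) := by
      have h0 : Filter.Tendsto (fun n : ℕ => t + 1 / ((n : ℝ) + 1)) Filter.atTop (nhds (t + 0)) :=
        Filter.Tendsto.const_add t tendsto_one_div_add_atTop_nhds_zero_nat
      rw [add_zero] at h0
      exact tendsto_of_tendsto_of_tendsto_of_le_of_le tendsto_const_nhds h0
        (fun n => (hu1 n).le) (fun n => (hu2 n).le)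
    have hGt : Filter.Tendsto (fun n => ENNReal.ofReal |G Φ g ((u n : ℝ)) x|) Filter.atTop
        (nhds (ENNReal.ofReal |G Φ g t x|)) := by
      apply (ENNReal.continuous_ofReal.continuousAt.comp
        ((continuous_abs.continuousAt).comp (G_continuous_t Φ hg x ht))).tendsto.comp htend
    refine le_of_tendsto hGt (Filter.Eventually.of_forall fun n => ?_)
    exact le_iSup (fun q : {q : ℚ // 0 < q} => ENNReal.ofReal |G Φ g (q : ℝ) x|) ⟨u n, hupos n⟩
  · apply iSup_le
    rintro ⟨q, hq⟩
    exact le_iSup (fun t : {t : ℝ // 0 < t} => ENNReal.ofReal |G Φ g (t : ℝ) x|)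
      ⟨(q : ℝ), by exact_mod_cast hq⟩

lemma smoothMax_measurable {g : ℝ → ℝ} (hg : Integrable g) :
    Measurable (smoothMax Φ g) := by
  have : smoothMax Φ g = fun x => ⨆ q : {q : ℚ // 0 < q}, ENNReal.ofReal |G Φ g (q : ℝ) x| :=
    funext fun x => smoothMax_rat Φ hg x
  rw [this]
  exact Measurable.iSup fun q =>
    ((G_continuous_x Φ hg (by exact_mod_cast q.2)).abs.measurable).ennreal_ofReal

lemma nn_scale {g : ℝ → ℝ} (hmg : Measurable g) {t : ℝ} (ht : 0 < t) :
    ∫⁻ y, (‖g (y / t)‖₊ : ℝ≥0∞) = ENNReal.ofReal t * ∫⁻ y, (‖g y‖₊ : ℝ≥0∞) :=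
  lint_scale (fun y => (‖g y‖₊ : ℝ≥0∞)) hmg.nnnorm.coe_nnreal_ennreal ht

/-- Dilation identity for the convolution. -/
lemma G_dilate {g : ℝ → ℝ} {s t : ℝ} (hs : 0 < s) (ht : 0 < t) (x : ℝ) :
    ∫ y, g (y / t) * (s⁻¹ * Φ ((x - y) / s)) = G Φ g (s / t) (x / t) := by
  have key := MeasureTheory.Measure.integral_comp_mul_left
    (fun y => g (y / t) * (s⁻¹ * Φ ((x - y) / s))) t
  unfold G
  have h2 : (fun u : ℝ => g u * ((s / t)⁻¹ * Φ ((x / t - u) / (s / t))))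
      = fun u : ℝ => t • (g ((t * u) / t) * (s⁻¹ * Φ ((x - t * u) / s))) := by
    funext u
    have harg : (x / t - u) / (s / t) = (x - t * u) / s := by
      field_simp
    rw [harg, mul_div_cancel_left₀ _ ht.ne']
    have hc : (s / t)⁻¹ = t * s⁻¹ := by
      field_simp
    rw [hc, smul_eq_mul]
    ring
  rw [h2, integral_smul, key, smul_smul, abs_of_pos (inv_pos.2 ht)]
  try rw [mul_inv_cancel₀ ht.ne', one_smul]

/-- Integrability of the double integrand. -/
lemma integrable_prod {g ψ : ℝ → ℝ} (hg : Integrable g) (hmg : Measurable g)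
    (hψm : Measurable ψ) (hψ0 : ∀ t, 0 ≤ ψ t) (hψi : IntegrableOn ψ (Ioi 0))
    {c : ℝ → ℝ} (hc : Continuous c) {C : ℝ} (hC : ∀ y, |c y| ≤ C) :
    Integrable (fun p : ℝ × ℝ => g (p.1 / p.2) * (ψ p.2 / p.2) * c p.1)
      (volume.prod (volume.restrict (Ioi 0))) := by
  have hFm : Measurable (fun p : ℝ × ℝ => g (p.1 / p.2) * (ψ p.2 / p.2) * c p.1) :=
    ((hmg.comp (measurable_fst.div measurable_snd)).mul
      ((hψm.comp measurable_snd).div measurable_snd)).mul (hc.measurable.comp measurable_fst)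
  refine ⟨hFm.aestronglyMeasurable, ?_⟩
  rw [hasFiniteIntegral_def]
  set B : ℝ≥0∞ := ∫⁻ y, (‖g y‖₊ : ℝ≥0∞) with hB
  have hBfin : B < ⊤ := hg.2
  set K : ℝ≥0∞ := ENNReal.ofReal C * B with hK
  have hKfin : K < ⊤ := ENNReal.mul_lt_top ENNReal.ofReal_lt_top hBfin
  have hψfin : (∫⁻ t in Ioi 0, ENNReal.ofReal (ψ t)) < ⊤ :=
    lt_of_le_of_lt (lintegral_mono fun t => Real.ofReal_le_enorm (ψ t)) hψi.2
  calc (∫⁻ p, (‖g (p.1 / p.2) * (ψ p.2 / p.2) * c p.1‖₊ : ℝ≥0∞)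
        ∂(volume.prod (volume.restrict (Ioi 0))))
      = ∫⁻ t in Ioi 0, ∫⁻ y, (‖g (y / t) * (ψ t / t) * c y‖₊ : ℝ≥0∞) :=
        lintegral_prod_symm' _ hFm.nnnorm.coe_nnreal_ennreal
    _ ≤ ∫⁻ t in Ioi 0, ENNReal.ofReal (ψ t) * K := by
        apply lintegral_mono_ae
        filter_upwards [ae_restrict_mem measurableSet_Ioi] with t ht
        have htpos : (0 : ℝ) < t := ht
        calc ∫⁻ y, (‖g (y / t) * (ψ t / t) * c y‖₊ : ℝ≥0∞)
            ≤ ∫⁻ y, (‖g (y / t)‖₊ : ℝ≥0∞) * (ENNReal.ofReal (ψ t / t) * ENNReal.ofReal C) := by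
              refine lintegral_mono fun y => ?_
              show (‖g (y / t) * (ψ t / t) * c y‖₊ : ℝ≥0∞)
                ≤ (‖g (y / t)‖₊ : ℝ≥0∞) * (ENNReal.ofReal (ψ t / t) * ENNReal.ofReal C)
              rw [nnnorm_mul, nnnorm_mul, ENNReal.coe_mul, ENNReal.coe_mul, mul_assoc]
              refine mul_le_mul_right (mul_le_mul' ?_ ?_) _
              · rw [← enorm_eq_nnnorm, Real.enorm_eq_ofReal (div_nonneg (hψ0 t) htpos.le)]
              · rw [← enorm_eq_nnnorm, Real.enorm_eq_ofReal_abs]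
                exact ENNReal.ofReal_le_ofReal (hC y)
          _ = (ENNReal.ofReal t * B) * (ENNReal.ofReal (ψ t / t) * ENNReal.ofReal C) := by
              have hm1 : Measurable (fun y : ℝ => (‖g (y / t)‖₊ : ℝ≥0∞)) :=
                (hmg.comp (measurable_id.div_const t)).nnnorm.coe_nnreal_ennreal
              rw [lintegral_mul_const _ hm1, nn_scale hmg htpos]
          _ = ENNReal.ofReal (ψ t) * K := by
              have hr : t * (ψ t / t) = ψ t := by field_simp
              have h3 : ENNReal.ofReal t * ENNReal.ofReal (ψ t / t) = ENNReal.ofReal (ψ t) := by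
                rw [← ENNReal.ofReal_mul htpos.le, hr]
              rw [hK, ← h3]
              ring
    _ = (∫⁻ t in Ioi 0, ENNReal.ofReal (ψ t)) * K :=
        lintegral_mul_const _ hψm.ennreal_ofReal
    _ < ⊤ := ENNReal.mul_lt_top hψfin hKfin

/-- The key convolution identity. -/
lemma G_hausdorff {g ψ : ℝ → ℝ} (hg : Integrable g) (hmg : Measurable g)
    (hψm : Measurable ψ) (hψ0 : ∀ t, 0 ≤ ψ t) (hψi : IntegrableOn ψ (Ioi 0))
    {s : ℝ} (hs : 0 < s) (x : ℝ) :
    G Φ (hausdorffOp ψ g) s x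
      = ∫ t in Ioi 0, (ψ t / t) * G Φ g (s / t) (x / t) := by
  have hccont : Continuous (fun y : ℝ => s⁻¹ * Φ ((x - y) / s)) :=
    continuous_const.mul (Φ.continuous.comp (by continuity))
  have hcbound : ∀ y : ℝ, |s⁻¹ * Φ ((x - y) / s)| ≤ s⁻¹ * (SchwartzMap.seminorm ℝ 0 0) Φ := by
    intro y
    rw [abs_mul, abs_of_pos (inv_pos.2 hs)]
    exact mul_le_mul_of_nonneg_left (Phi_bound Φ _) (inv_nonneg.2 hs.le)
  have hint := integrable_prod hg hmg hψm hψ0 hψi hccont hcbound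
  have hswap := MeasureTheory.integral_integral_swap
    (f := fun y t => g (y / t) * (ψ t / t) * (s⁻¹ * Φ ((x - y) / s)))
    (μ := volume) (ν := volume.restrict (Ioi 0)) hint
  calc G Φ (hausdorffOp ψ g) s x
      = ∫ y, ∫ t in Ioi 0, g (y / t) * (ψ t / t) * (s⁻¹ * Φ ((x - y) / s)) := by
        unfold G hausdorffOp
        congr 1
        funext y
        exact (integral_mul_const _ _).symm
    _ = ∫ t in Ioi 0, ∫ y, g (y / t) * (ψ t / t) * (s⁻¹ * Φ ((x - y) / s)) := hswap
    _ = ∫ t in Ioi 0, (ψ t / t) * G Φ g (s / t) (x / t) := by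
        apply setIntegral_congr_fun measurableSet_Ioi
        intro t ht
        have htpos : (0 : ℝ) < t := ht
        dsimp only
        have h1 : (fun y => g (y / t) * (ψ t / t) * (s⁻¹ * Φ ((x - y) / s)))
            = fun y => (ψ t / t) * (g (y / t) * (s⁻¹ * Φ ((x - y) / s))) := by
          funext y; ring
        rw [h1, integral_const_mul, G_dilate Φ hs htpos x]

/-- The swap computation. -/
lemma swap_calc {ψ : ℝ → ℝ} (hψm : Measurable ψ) (hψ0 : ∀ t, 0 ≤ ψ t)
    (h : ℝ → ℝ≥0∞) (hh : Measurable h) :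
    ∫⁻ x, ∫⁻ t in Ioi 0, ENNReal.ofReal (ψ t / t) * h (x / t)
      = (∫⁻ t in Ioi 0, ENNReal.ofReal (ψ t)) * ∫⁻ x, h x := by
  have hmeas : AEMeasurable (Function.uncurry fun (x t : ℝ) =>
      ENNReal.ofReal (ψ t / t) * h (x / t)) (volume.prod (volume.restrict (Ioi 0))) := by
    apply Measurable.aemeasurable
    exact (((hψm.comp measurable_snd).div measurable_snd).ennreal_ofReal).mul
      (hh.comp (measurable_fst.div measurable_snd))
  have hswap := lintegral_lintegral_swap (μ := volume) (ν := volume.restrict (Ioi 0)) hmeas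
  rw [hswap]
  calc ∫⁻ t in Ioi 0, ∫⁻ x, ENNReal.ofReal (ψ t / t) * h (x / t)
      = ∫⁻ t in Ioi 0, ENNReal.ofReal (ψ t) * ∫⁻ x, h x := by
        apply setLIntegral_congr_fun measurableSet_Ioi
        intro t ht
        dsimp only
        have htpos : (0 : ℝ) < t := ht
        have hm2 : Measurable (fun x : ℝ => h (x / t)) := hh.comp (measurable_id.div_const t)
        rw [lintegral_const_mul _ hm2,
          lint_scale h hh htpos, ← mul_assoc, ← ENNReal.ofReal_mul (div_nonneg (hψ0 t) htpos.le),
          div_mul_cancel₀ (ψ t) htpos.ne']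
    _ = (∫⁻ t in Ioi 0, ENNReal.ofReal (ψ t)) * ∫⁻ x, h x :=
        lintegral_mul_const _ hψm.ennreal_ofReal

/-- Pointwise bound for the maximal function of the Hausdorff operator. -/
lemma pointwise_bound {g ψ : ℝ → ℝ} (hg : Integrable g) (hmg : Measurable g)
    (hψm : Measurable ψ) (hψ0 : ∀ t, 0 ≤ ψ t) (hψi : IntegrableOn ψ (Ioi 0)) (x : ℝ) :
    smoothMax Φ (hausdorffOp ψ g) x
      ≤ ∫⁻ t in Ioi 0, ENNReal.ofReal (ψ t / t) * smoothMax Φ g (x / t) := by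
  rw [smoothMax_eq]
  apply iSup_le
  rintro ⟨s, hs⟩
  rw [G_hausdorff Φ hg hmg hψm hψ0 hψi hs x]
  calc ENNReal.ofReal |∫ t in Ioi 0, (ψ t / t) * G Φ g (s / t) (x / t)|
      = (‖∫ t in Ioi 0, (ψ t / t) * G Φ g (s / t) (x / t)‖₊ : ℝ≥0∞) :=
        (Real.enorm_eq_ofReal_abs _).symm
    _ ≤ ∫⁻ t in Ioi 0, (‖(ψ t / t) * G Φ g (s / t) (x / t)‖₊ : ℝ≥0∞) :=
        enorm_integral_le_lintegral_enorm _
    _ ≤ ∫⁻ t in Ioi 0, ENNReal.ofReal (ψ t / t) * smoothMax Φ g (x / t) := by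
        apply lintegral_mono_ae
        filter_upwards [ae_restrict_mem measurableSet_Ioi] with t ht
        have htpos : (0 : ℝ) < t := ht
        rw [nnnorm_mul, ENNReal.coe_mul, ← enorm_eq_nnnorm, ← enorm_eq_nnnorm, Real.enorm_eq_ofReal (div_nonneg (hψ0 t) htpos.le),
          Real.enorm_eq_ofReal_abs]
        refine mul_le_mul_right ?_ _
        rw [smoothMax_eq]
        exact le_iSup (fun u : {u : ℝ // 0 < u} => ENNReal.ofReal |G Φ g (u : ℝ) (x / t)|)
          ⟨s / t, div_pos hs htpos⟩

lemma smoothMax_congr {h1 h2 : ℝ → ℝ} (h : h1 =ᵐ[volume] h2) :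
    smoothMax Φ h1 = smoothMax Φ h2 := by
  funext x
  unfold smoothMax
  congr 1
  funext t
  congr 2
  exact integral_congr_ae (h.mul Filter.EventuallyEq.rfl)

end HausdorffAux

/-- `ℋ_φ` is bounded on `H¹(ℝ)` with norm at most `∫₀^∞ φ(t) dt`. -/
theorem hausdorffOp_bounded_on_H1
    (φ : ℝ → ℝ) (hφ : ∀ t ∈ Set.Ioi (0 : ℝ), 0 ≤ φ t)
    (hφ1 : IntegrableOn φ (Set.Ioi 0))
    (Φ : SchwartzMap ℝ ℝ) (hΦ : (∫ x, Φ x) ≠ 0)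
    (f : ℝ → ℝ) (hf : Integrable f) (hfH : (∫⁻ x, smoothMax Φ f x) < ⊤) :
    Integrable (hausdorffOp φ f) ∧
      (∫⁻ x, smoothMax Φ (hausdorffOp φ f) x)
        ≤ ENNReal.ofReal (∫ t in Set.Ioi (0 : ℝ), φ t) * ∫⁻ x, smoothMax Φ f x := by
  classical
  set g : ℝ → ℝ := hf.1.mk f with hgdef
  have hmg : Measurable g := hf.1.measurable_mk
  have hfg : f =ᵐ[volume] g := hf.1.ae_eq_mk
  have hg : Integrable g := hf.congr hfg
  set ψ : ℝ → ℝ := fun t => |hφ1.1.mk φ t| with hψdef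
  have hψm : Measurable ψ := hφ1.1.measurable_mk.abs
  have hψ0 : ∀ t, 0 ≤ ψ t := fun t => abs_nonneg _
  have hφψ : φ =ᵐ[volume.restrict (Set.Ioi 0)] ψ := by
    filter_upwards [hφ1.1.ae_eq_mk, ae_restrict_mem measurableSet_Ioi] with t h1 h2
    rw [hψdef]
    dsimp only
    rw [← h1, abs_of_nonneg (hφ t h2)]
  have hψi : IntegrableOn ψ (Set.Ioi 0) := hφ1.congr hφψ
  obtain ⟨N, hNsub, hNmeas, hNnull⟩ := exists_measurable_superset_of_null (ae_iff.1 hfg)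
  have hae : hausdorffOp φ f =ᵐ[volume] hausdorffOp ψ g := by
    have hSmeas : MeasurableSet {p : ℝ × ℝ | p.2 / p.1 ∈ N} :=
      (measurable_snd.div measurable_fst) hNmeas
    have hSnull : ((volume.restrict (Set.Ioi 0)).prod volume) {p : ℝ × ℝ | p.2 / p.1 ∈ N} = 0 := by
      rw [MeasureTheory.Measure.measure_prod_null hSmeas]
      filter_upwards [ae_restrict_mem measurableSet_Ioi] with t ht
      have htpos : (0 : ℝ) < t := ht
      show volume (Prod.mk t ⁻¹' {p : ℝ × ℝ | p.2 / p.1 ∈ N}) = 0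
      have hpre : Prod.mk t ⁻¹' {p : ℝ × ℝ | p.2 / p.1 ∈ N} = (· * t⁻¹) ⁻¹' N := by
        ext x
        simp [div_eq_mul_inv]
      rw [hpre, Real.volume_preimage_mul_right (inv_ne_zero htpos.ne'), hNnull, mul_zero]
    have hswap : (volume.prod (volume.restrict (Set.Ioi 0))) {p : ℝ × ℝ | p.1 / p.2 ∈ N} = 0 := by
      have hmeas2 : MeasurableSet {p : ℝ × ℝ | p.1 / p.2 ∈ N} :=
        (measurable_fst.div measurable_snd) hNmeas
      rw [← MeasureTheory.Measure.prod_swap, MeasureTheory.Measure.map_apply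
        measurable_swap hmeas2]
      exact hSnull
    have h2 := MeasureTheory.Measure.measure_ae_null_of_prod_null hswap
    filter_upwards [h2] with x hx
    simp only [Pi.zero_apply] at hx
    have hx' : ∀ᵐ t ∂(volume.restrict (Set.Ioi 0)), x / t ∉ N :=
      measure_eq_zero_iff_ae_notMem.1 hx
    have hstep1 : hausdorffOp φ f x = hausdorffOp ψ f x :=
      integral_congr_ae (hφψ.mono fun t h => by dsimp only; rw [h])
    rw [hstep1]
    apply integral_congr_ae
    filter_upwards [hx'] with t htn
    have hfga : f (x / t) = g (x / t) := by
      by_contra hne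
      exact htn (hNsub hne)
    rw [hfga]
  have hsm : smoothMax Φ f = smoothMax Φ g := HausdorffAux.smoothMax_congr Φ hfg
  have hsmH : smoothMax Φ (hausdorffOp φ f) = smoothMax Φ (hausdorffOp ψ g) :=
    HausdorffAux.smoothMax_congr Φ hae
  have hφint : (∫ t in Set.Ioi (0 : ℝ), φ t) = ∫ t in Set.Ioi (0 : ℝ), ψ t :=
    integral_congr_ae hφψ
  have hHint : Integrable (hausdorffOp ψ g) := by
    have hFm : Measurable (fun p : ℝ × ℝ => g (p.1 / p.2) * (ψ p.2 / p.2)) :=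
      (hmg.comp (measurable_fst.div measurable_snd)).mul
        ((hψm.comp measurable_snd).div measurable_snd)
    refine ⟨(hFm.stronglyMeasurable.integral_prod_right').aestronglyMeasurable, ?_⟩
    rw [hasFiniteIntegral_def]
    have hbound : ∀ x, (‖hausdorffOp ψ g x‖₊ : ℝ≥0∞)
        ≤ ∫⁻ t in Set.Ioi 0, ENNReal.ofReal (ψ t / t) * (‖g (x / t)‖₊ : ℝ≥0∞) := by
      intro x
      refine le_trans (enorm_integral_le_lintegral_enorm _) ?_
      refine le_of_eq (setLIntegral_congr_fun measurableSet_Ioi ?_)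
      intro t ht
      dsimp only
      rw [enorm_mul,
        Real.enorm_eq_ofReal (div_nonneg (hψ0 t) (le_of_lt ht)), mul_comm, enorm_eq_nnnorm]
    calc ∫⁻ x, (‖hausdorffOp ψ g x‖₊ : ℝ≥0∞)
        ≤ ∫⁻ x, ∫⁻ t in Set.Ioi 0, ENNReal.ofReal (ψ t / t) * (‖g (x / t)‖₊ : ℝ≥0∞) :=
          lintegral_mono hbound
      _ = (∫⁻ t in Set.Ioi 0, ENNReal.ofReal (ψ t)) * ∫⁻ x, (‖g x‖₊ : ℝ≥0∞) :=
          HausdorffAux.swap_calc hψm hψ0 _ hmg.nnnorm.coe_nnreal_ennreal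
      _ < ⊤ := ENNReal.mul_lt_top
          (lt_of_le_of_lt (lintegral_mono fun t => Real.ofReal_le_enorm (ψ t)) hψi.2) hg.2
  refine ⟨hHint.congr hae.symm, ?_⟩
  rw [hsmH, hsm, hφint]
  rw [ofReal_integral_eq_lintegral_ofReal hψi (Filter.Eventually.of_forall hψ0)]
  calc ∫⁻ x, smoothMax Φ (hausdorffOp ψ g) x
      ≤ ∫⁻ x, ∫⁻ t in Set.Ioi 0, ENNReal.ofReal (ψ t / t) * smoothMax Φ g (x / t) :=
        lintegral_mono (HausdorffAux.pointwise_bound Φ hg hmg hψm hψ0 hψi)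
    _ = (∫⁻ t in Set.Ioi 0, ENNReal.ofReal (ψ t)) * ∫⁻ x, smoothMax Φ g x :=
        HausdorffAux.swap_calc hψm hψ0 _ (HausdorffAux.smoothMax_measurable Φ hg)
end

section
/- Let 0 < δ ≤ 1, ε > 0, and let z = x + iy with x ∈ ℝ and y > 0. Define φ_{ε,z}(t) := t^ε / (z + ti)^{1+ε} for t > 0, where complex powers are principal-branch. Then for every t ∈ [δ,1], |φ_{ε,z}(t) − φ_{ε,z}(1)| ≤ ε δ^{−2} (x²+1)^{−(1+ε)/2} + (1+ε) δ^{−2} (x²+1)^{−(2+ε)/2}. -/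
open MeasureTheory Complex

private lemma aux_rpow_bound (δ s K r q p : ℝ) (hδ : 0 < δ) (hδs : δ ≤ s) (hs1 : s ≤ 1)
    (hK : 0 < K) (hr : s * Real.sqrt K ≤ r) (hp : p = q + 2) (hp0 : 0 ≤ p) :
    s ^ q / r ^ p ≤ δ ^ (-2 : ℤ) * K ^ (-(p / 2)) := by
  have hs0 : 0 < s := hδ.trans_le hδs
  have hsr : 0 < s * Real.sqrt K := by positivity
  have hr0 : 0 < r := hsr.trans_le hr
  have h1 : (s * Real.sqrt K) ^ p ≤ r ^ p := Real.rpow_le_rpow hsr.le hr hp0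
  have h2 : s ^ q / r ^ p ≤ s ^ q / (s * Real.sqrt K) ^ p := by
    gcongr
  have h3 : (s * Real.sqrt K) ^ p = s ^ p * K ^ (p / 2) := by
    rw [Real.mul_rpow hs0.le (Real.sqrt_nonneg K), Real.sqrt_eq_rpow,
      ← Real.rpow_mul hK.le, show 1 / 2 * p = p / 2 by ring]
  have h4 : s ^ q / (s ^ p * K ^ (p / 2)) = s ^ (-2 : ℝ) * K ^ (-(p / 2)) := by
    rw [div_mul_eq_div_div, ← Real.rpow_sub hs0, show q - p = (-2 : ℝ) by rw [hp]; ring,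
      Real.rpow_neg hK.le, div_eq_mul_inv]
  have h5 : s ^ (-2 : ℝ) ≤ δ ^ (-2 : ℤ) := by
    have : δ ^ (-2 : ℤ) = δ ^ (-2 : ℝ) := by
      rw [show (-2 : ℝ) = ((-2 : ℤ) : ℝ) by norm_num, Real.rpow_intCast]
    rw [this]
    exact Real.rpow_le_rpow_of_nonpos hδ hδs (by norm_num)
  calc s ^ q / r ^ p ≤ s ^ q / (s * Real.sqrt K) ^ p := h2
    _ = s ^ (-2 : ℝ) * K ^ (-(p / 2)) := by rw [h3, h4]
    _ ≤ δ ^ (-2 : ℤ) * K ^ (-(p / 2)) := by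
        apply mul_le_mul_of_nonneg_right h5 (Real.rpow_nonneg hK.le _)



/-- for `z = x + iy` with `y > 0`, `φ_{ε,z}(t) := t^ε / (z + ti)^{1+ε}`
(principal-branch powers) satisfies, for every `t ∈ [δ,1]`,
`|φ_{ε,z}(t) − φ_{ε,z}(1)| ≤ ε δ⁻² (x²+1)^{−(1+ε)/2} + (1+ε) δ⁻² (x²+1)^{−(2+ε)/2}`. -/
theorem phi_eps_z_diff_bound (δ ε x y : ℝ) (hδ : 0 < δ) (hδ1 : δ ≤ 1)
    (hε : 0 < ε) (hy : 0 < y) (t : ℝ) (ht : t ∈ Set.Icc δ 1) :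
    ‖(t : ℂ) ^ (ε : ℂ) / ((x : ℂ) + (y : ℂ) * I + (t : ℂ) * I) ^ (1 + (ε : ℂ))
        - (1 : ℂ) ^ (ε : ℂ) / ((x : ℂ) + (y : ℂ) * I + (1 : ℂ) * I) ^ (1 + (ε : ℂ))‖
      ≤ ε * δ ^ (-2 : ℤ) * (x ^ 2 + 1) ^ (-((1 + ε) / 2))
          + (1 + ε) * δ ^ (-2 : ℤ) * (x ^ 2 + 1) ^ (-((2 + ε) / 2)) := by
  set C : ℝ := ε * δ ^ (-2 : ℤ) * (x ^ 2 + 1) ^ (-((1 + ε) / 2))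
          + (1 + ε) * δ ^ (-2 : ℤ) * (x ^ 2 + 1) ^ (-((2 + ε) / 2)) with hC
  set w : ℝ → ℂ := fun s => (x : ℂ) + (y : ℂ) * I + (s : ℂ) * I with hw
  set f : ℝ → ℂ := fun s => (s : ℂ) ^ (ε : ℂ) / (w s) ^ (1 + (ε : ℂ)) with hf
  set f' : ℝ → ℂ := fun s =>
    ((ε : ℂ) * (s : ℂ) ^ ((ε : ℂ) - 1) * (w s) ^ (1 + (ε : ℂ))
      - (s : ℂ) ^ (ε : ℂ) * ((1 + (ε : ℂ)) * (w s) ^ (1 + (ε : ℂ) - 1) * I))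
      / ((w s) ^ (1 + (ε : ℂ))) ^ 2 with hf'
  -- basic facts
  have hwim : ∀ s ∈ Set.Icc δ 1, (w s).im = y + s := by
    intro s hs; simp [hw]
  have hwne : ∀ s ∈ Set.Icc δ 1, w s ≠ 0 := by
    intro s hs h
    have := hwim s hs
    rw [h] at this
    simp at this
    nlinarith [hs.1]
  -- derivative
  have hderiv : ∀ s ∈ Set.Icc δ 1, HasDerivAt f (f' s) s := by
    intro s hs
    have hs0 : 0 < s := lt_of_lt_of_le hδ hs.1
    have hn : HasDerivAt (fun u : ℝ => (u : ℂ) ^ (ε : ℂ)) ((ε : ℂ) * (s : ℂ) ^ ((ε : ℂ) - 1)) s := by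
      have hr : ((ε : ℂ) - 1) ≠ -1 := by
        intro h
        have : (ε : ℂ) = 0 := by linear_combination h
        exact hε.ne' (by exact_mod_cast this)
      have h1 := (hasDerivAt_ofReal_cpow_const' hs0.ne' hr).const_mul (ε : ℂ)
      have he : (ε : ℂ) - 1 + 1 = (ε : ℂ) := by ring
      rw [he] at h1
      have : (fun u : ℝ => (u : ℂ) ^ (ε : ℂ)) = fun u : ℝ => (ε : ℂ) * ((u : ℂ) ^ (ε : ℂ) / (ε : ℂ)) := by
        funext u
        have h0 : (ε : ℂ) ≠ 0 := by exact_mod_cast hε.ne'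
        rw [mul_div_cancel₀ _ h0]
      rw [this]
      exact h1
    have hwder : HasDerivAt w I s := by
      have h2 : HasDerivAt (fun u : ℂ => (x : ℂ) + (y : ℂ) * I + u * I) I (s : ℂ) := by
        simpa using (((hasDerivAt_id ((s : ℂ))).mul_const I).const_add ((x : ℂ) + (y : ℂ) * I))
      exact h2.comp_ofReal
    have hslit : w s ∈ slitPlane := by
      rw [Complex.mem_slitPlane_iff]
      right
      rw [hwim s hs]
      nlinarith [hs.1]
    have hd : HasDerivAt (fun u : ℝ => (w u) ^ (1 + (ε : ℂ)))
        ((1 + (ε : ℂ)) * (w s) ^ (1 + (ε : ℂ) - 1) * I) s := by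
      have h2 : HasDerivAt (fun u : ℂ => (x : ℂ) + (y : ℂ) * I + u * I) I (s : ℂ) := by
        simpa using (((hasDerivAt_id ((s : ℂ))).mul_const I).const_add ((x : ℂ) + (y : ℂ) * I))
      have h3 : HasDerivAt (fun u : ℂ => ((x : ℂ) + (y : ℂ) * I + u * I) ^ (1 + (ε : ℂ)))
          ((1 + (ε : ℂ)) * (w s) ^ (1 + (ε : ℂ) - 1) * I) (s : ℂ) := h2.cpow_const hslit
      exact h3.comp_ofReal
    have hdne : (w s) ^ (1 + (ε : ℂ)) ≠ 0 := by
      rw [Complex.cpow_def_of_ne_zero (hwne s hs)]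
      exact Complex.exp_ne_zero _
    exact hn.div hd hdne
  -- norm bound on the derivative
  have hC0 : 0 ≤ C := by
    have h1 : (0:ℝ) ≤ δ ^ (-2 : ℤ) := by positivity
    have h2 : (0:ℝ) ≤ (x ^ 2 + 1) ^ (-((1 + ε) / 2)) := by positivity
    have h3 : (0:ℝ) ≤ (x ^ 2 + 1) ^ (-((2 + ε) / 2)) := by positivity
    have h4 := hε.le
    rw [hC]
    have := mul_nonneg (mul_nonneg h4 h1) h2
    have := mul_nonneg (mul_nonneg (by linarith : (0:ℝ) ≤ 1 + ε) h1) h3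
    linarith
  have hbound : ∀ s ∈ Set.Icc δ 1, ‖f' s‖ ≤ C := by
    intro s hs
    have hs0 : 0 < s := lt_of_lt_of_le hδ hs.1
    have hwsne := hwne s hs
    set r : ℝ := ‖w s‖ with hr
    have hr0 : 0 < r := norm_pos_iff.mpr hwsne
    have hK : (0:ℝ) < x ^ 2 + 1 := by positivity
    have hrK : s * Real.sqrt (x ^ 2 + 1) ≤ r := by
      have hre : (w s).re = x := by simp [hw]
      have him : (w s).im = y + s := by simp [hw]
      rw [hr, Complex.norm_def, Complex.normSq_apply, hre, him]
      rw [show s * Real.sqrt (x ^ 2 + 1) = Real.sqrt ((x ^ 2 + 1) * s ^ 2) by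
        rw [Real.sqrt_mul (by positivity), Real.sqrt_sq hs0.le]; ring]
      apply Real.sqrt_le_sqrt
      nlinarith [sq_nonneg x, mul_pos hy hs0, sq_nonneg y,
        mul_nonneg (mul_nonneg (sq_nonneg x) (sub_nonneg.2 hs.2)) (by linarith : (0:ℝ) ≤ 1 + s)]
    have e1 : ‖(w s) ^ (1 + (ε : ℂ))‖ = r ^ (1 + ε) := by
      rw [norm_cpow_of_ne_zero hwsne]
      simp [hr]
    have e2 : ‖(w s) ^ (1 + (ε : ℂ) - 1)‖ = r ^ ε := by
      rw [show 1 + (ε : ℂ) - 1 = (ε : ℂ) by ring, norm_cpow_of_ne_zero hwsne]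
      simp [hr]
    have e3 : ‖(s : ℂ) ^ (ε : ℂ)‖ = s ^ ε := by
      rw [norm_cpow_eq_rpow_re_of_pos hs0]; simp
    have e4 : ‖(s : ℂ) ^ ((ε : ℂ) - 1)‖ = s ^ (ε - 1) := by
      rw [norm_cpow_eq_rpow_re_of_pos hs0]; simp
    have e5 : ‖(ε : ℂ)‖ = ε := by
      rw [Complex.norm_real, Real.norm_eq_abs, abs_of_pos hε]
    have e6 : ‖1 + (ε : ℂ)‖ = 1 + ε := by
      rw [show (1 + (ε : ℂ)) = ((1 + ε : ℝ) : ℂ) by push_cast; ring, Complex.norm_real, Real.norm_eq_abs,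
        abs_of_pos (by linarith)]
    have hnum : ‖(ε : ℂ) * (s : ℂ) ^ ((ε : ℂ) - 1) * (w s) ^ (1 + (ε : ℂ))
        - (s : ℂ) ^ (ε : ℂ) * ((1 + (ε : ℂ)) * (w s) ^ (1 + (ε : ℂ) - 1) * I)‖
        ≤ ε * s ^ (ε - 1) * r ^ (1 + ε) + s ^ ε * ((1 + ε) * r ^ ε) := by
      refine (norm_sub_le _ _).trans ?_
      simp only [norm_mul, e1, e2, e3, e4, e5, e6, Complex.norm_I, mul_one]
      exact le_refl _
    have hfs : ‖f' s‖ ≤ (ε * s ^ (ε - 1) * r ^ (1 + ε) + s ^ ε * ((1 + ε) * r ^ ε))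
        / (r ^ (1 + ε)) ^ 2 := by
      simp only [hf', norm_div, norm_pow]
      rw [e1]
      gcongr
    have h1ne : r ^ (1 + ε) ≠ 0 := (Real.rpow_pos_of_pos hr0 _).ne'
    have hmul : (r ^ (1 + ε)) ^ 2 = r ^ ε * r ^ (2 + ε) := by
      rw [sq, ← Real.rpow_add hr0, ← Real.rpow_add hr0]
      ring_nf
    have h2ne : r ^ (2 + ε) ≠ 0 := (Real.rpow_pos_of_pos hr0 _).ne'
    have h3ne : r ^ ε ≠ 0 := (Real.rpow_pos_of_pos hr0 _).ne'
    have t1 : ε * s ^ (ε - 1) * r ^ (1 + ε) / (r ^ (1 + ε)) ^ 2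
        = ε * (s ^ (ε - 1) / r ^ (1 + ε)) := by
      rw [sq]
      field_simp
    have t2 : s ^ ε * ((1 + ε) * r ^ ε) / (r ^ (1 + ε)) ^ 2
        = (1 + ε) * (s ^ ε / r ^ (2 + ε)) := by
      rw [hmul]
      field_simp
    have b1 : s ^ (ε - 1) / r ^ (1 + ε) ≤ δ ^ (-2 : ℤ) * (x ^ 2 + 1) ^ (-((1 + ε) / 2)) :=
      aux_rpow_bound δ s (x ^ 2 + 1) r (ε - 1) (1 + ε) hδ hs.1 hs.2 hK hrK (by ring) (by linarith)
    have b2 : s ^ ε / r ^ (2 + ε) ≤ δ ^ (-2 : ℤ) * (x ^ 2 + 1) ^ (-((2 + ε) / 2)) :=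
      aux_rpow_bound δ s (x ^ 2 + 1) r ε (2 + ε) hδ hs.1 hs.2 hK hrK (by ring) (by linarith)
    calc ‖f' s‖ ≤ (ε * s ^ (ε - 1) * r ^ (1 + ε) + s ^ ε * ((1 + ε) * r ^ ε))
          / (r ^ (1 + ε)) ^ 2 := hfs
      _ = ε * (s ^ (ε - 1) / r ^ (1 + ε)) + (1 + ε) * (s ^ ε / r ^ (2 + ε)) := by
          rw [add_div, t1, t2]
      _ ≤ ε * (δ ^ (-2 : ℤ) * (x ^ 2 + 1) ^ (-((1 + ε) / 2)))
            + (1 + ε) * (δ ^ (-2 : ℤ) * (x ^ 2 + 1) ^ (-((2 + ε) / 2))) :=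
          add_le_add (mul_le_mul_of_nonneg_left b1 hε.le)
            (mul_le_mul_of_nonneg_left b2 (by linarith))
      _ = C := by rw [hC]; ring
  -- mean value inequality
  have hmem1 : (1 : ℝ) ∈ Set.Icc δ 1 := Set.mem_Icc.2 ⟨hδ1, le_refl 1⟩
  have hmvt := (convex_Icc δ 1).norm_image_sub_le_of_norm_hasDerivWithin_le
    (fun s hs => (hderiv s hs).hasDerivWithinAt) hbound hmem1 ht
  have ht1 : ‖t - 1‖ ≤ 1 := by
    rw [Real.norm_eq_abs, abs_le]
    constructor
    · linarith [ht.1]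
    · linarith [ht.2]
  have heq : f t - f 1 = (t : ℂ) ^ (ε : ℂ) / ((x : ℂ) + (y : ℂ) * I + (t : ℂ) * I) ^ (1 + (ε : ℂ))
      - (1 : ℂ) ^ (ε : ℂ) / ((x : ℂ) + (y : ℂ) * I + (1 : ℂ) * I) ^ (1 + (ε : ℂ)) := by
    simp [hf, hw]
  rw [← heq]
  calc ‖f t - f 1‖ ≤ C * ‖t - 1‖ := hmvt
    _ ≤ C * 1 := mul_le_mul_of_nonneg_left ht1 hC0
    _ = C := mul_one C
end

section
/- Let φ be a nonnegative function in L¹(0,∞), let ψ be a Schwartz function on ℝ, and let f ∈ L¹(ℝ). Define the nontangential maximal function 𝓜_ψ f(x) := sup { |(f * ψ_t)(y)| : t > 0, |x − y| < t }, where ψ_t(x) := t⁻¹ψ(x/t). Then for every x ∈ ℝ, 𝓜_ψ(ℋ_φ f)(x) ≤ ℋ_φ(𝓜_ψ f)(x), and consequently ∫_ℝ 𝓜_ψ(ℋ_φ f)(x) dx ≤ (∫₀^∞ φ(t) dt) · ∫_ℝ 𝓜_ψ f(x) dx. -/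
open MeasureTheory Set
open scoped ENNReal

/-- The nontangential maximal function
`𝓜_ψ f (x) = sup { |(f * ψ_t)(y)| : t > 0, |x − y| < t }`, where `ψ_t(x) = t⁻¹ ψ(x/t)`,
valued in `ℝ≥0∞`. -/
noncomputable def ntMax (ψ : SchwartzMap ℝ ℝ) (f : ℝ → ℝ) (x : ℝ) : ℝ≥0∞ :=
  ⨆ p : {p : ℝ × ℝ // 0 < p.1 ∧ |x - p.2| < p.1},
    ENNReal.ofReal |∫ z, f z * ((p : ℝ × ℝ).1⁻¹ * ψ (((p : ℝ × ℝ).2 - z) / (p : ℝ × ℝ).1))|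

lemma ntMax_congr (ψ : SchwartzMap ℝ ℝ) {f g : ℝ → ℝ} (h : f =ᵐ[volume] g) (x : ℝ) :
    ntMax ψ f x = ntMax ψ g x := by
  unfold ntMax
  congr 1
  funext p
  congr 2
  apply integral_congr_ae
  filter_upwards [h] with z hz
  rw [hz]

lemma ntMax_lsc (ψ : SchwartzMap ℝ ℝ) (f : ℝ → ℝ) : LowerSemicontinuous (ntMax ψ f) := by
  intro x c hc
  rw [ntMax, gt_iff_lt, lt_iSup_iff] at hc
  obtain ⟨⟨⟨t, y⟩, ht, hxy⟩, hp⟩ := hc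
  have hopen : IsOpen {x' : ℝ | |x' - y| < t} :=
    isOpen_lt (by fun_prop) continuous_const
  filter_upwards [hopen.mem_nhds hxy] with x' hx'
  calc c < _ := hp
  _ ≤ ntMax ψ f x' := le_iSup (fun p : {p : ℝ × ℝ // 0 < p.1 ∧ |x' - p.2| < p.1} =>
      ENNReal.ofReal |∫ z, f z * ((p : ℝ × ℝ).1⁻¹ * ψ (((p : ℝ × ℝ).2 - z) / (p : ℝ × ℝ).1))|)
      ⟨(t, y), ht, hx'⟩

lemma hausdorffOp_congr_ae (φ : ℝ → ℝ) {f g : ℝ → ℝ} (h : f =ᵐ[volume] g) :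
    hausdorffOp φ f =ᵐ[volume] hausdorffOp φ g := by
  obtain ⟨N, hsub, hNm, hN0⟩ := exists_measurable_superset_of_null (ae_iff.mp h)
  set ν := volume.restrict (Set.Ioi (0:ℝ)) with hν
  have hTm : MeasurableSet {q : ℝ × ℝ | q.2 / q.1 ∈ N} :=
    (measurable_snd.div measurable_fst) hNm
  have hT0 : (ν.prod volume) {q : ℝ × ℝ | q.2 / q.1 ∈ N} = 0 := by
    rw [Measure.measure_prod_null hTm]
    rw [Filter.EventuallyEq, ae_restrict_iff' measurableSet_Ioi]
    refine Filter.Eventually.of_forall fun s hs => ?_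
    have hs0 : (0:ℝ) < s := hs
    have : (Prod.mk s ⁻¹' {q : ℝ × ℝ | q.2 / q.1 ∈ N}) = (fun x : ℝ => s⁻¹ * x) ⁻¹' N := by
      ext x; simp [div_eq_inv_mul]
    rw [this]
    have hmap := Real.map_volume_mul_left (inv_ne_zero hs0.ne')
    have : volume ((fun x : ℝ => s⁻¹ * x) ⁻¹' N)
        = (Measure.map (fun x : ℝ => s⁻¹ * x) volume) N := by
      rw [Measure.map_apply (measurable_const_mul _) hNm]
    rw [this, hmap]
    simp [hN0]
  have hT0' : (volume.prod ν) {q : ℝ × ℝ | q.1 / q.2 ∈ N} = 0 := by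
    have h1 : volume.prod ν = Measure.map Prod.swap (ν.prod volume) := (Measure.prod_swap (μ := ν) (ν := (volume : Measure ℝ))).symm
    have h2 : (Measure.map Prod.swap (ν.prod volume)) ((fun q : ℝ × ℝ => q.1 / q.2) ⁻¹' N)
        = (ν.prod volume) ((fun q : ℝ × ℝ => q.2 / q.1) ⁻¹' N) := by
      rw [Measure.map_apply measurable_swap (show MeasurableSet ((fun q : ℝ × ℝ => q.1 / q.2) ⁻¹' N) from (measurable_fst.div measurable_snd) hNm)]
      rfl
    rw [h1]; exact h2.trans hT0
  have := (Measure.measure_prod_null (show MeasurableSet ((fun q : ℝ × ℝ => q.1 / q.2) ⁻¹' N) from (measurable_fst.div measurable_snd) hNm)).mp hT0'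
  filter_upwards [this] with x hx
  have hx' : ∀ᵐ s ∂ν, x / s ∉ N := by
    rw [ae_iff]; simp only [not_not]; exact hx
  unfold hausdorffOp
  apply integral_congr_ae
  filter_upwards [hx'] with s hsN
  have : f (x / s) = g (x / s) := by
    by_contra hne
    exact hsN (hsub hne)
  rw [this]


lemma key_pointwise (φ : ℝ → ℝ) (hφ : ∀ t ∈ Set.Ioi (0:ℝ), 0 ≤ φ t)
    (hφ1 : IntegrableOn φ (Set.Ioi 0))
    (ψ : SchwartzMap ℝ ℝ) (f : ℝ → ℝ) (hf : Integrable f)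
    (hfm : StronglyMeasurable f) (x : ℝ) :
    ntMax ψ (hausdorffOp φ f) x
      ≤ ∫⁻ t in Set.Ioi (0:ℝ), ntMax ψ f (x / t) * ENNReal.ofReal (φ t / t) := by
  refine iSup_le ?_
  rintro ⟨⟨t, y⟩, ht, hxy⟩
  simp only
  set K : ℝ → ℝ := fun z => t⁻¹ * ψ ((y - z) / t) with hKdef
  set G : ℝ → ℝ → ℝ := fun s z => K z * (f (z / s) * (φ s / s)) with hGdef
  set C : ℝ := SchwartzMap.seminorm ℝ 0 0 ψ with hCdef
  set ν : Measure ℝ := volume.restrict (Set.Ioi (0:ℝ)) with hν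
  have hKcont : Continuous K := by
    have := ψ.continuous
    fun_prop
  have hKbd : ∀ z, ‖K z‖ ≤ t⁻¹ * C := by
    intro z
    rw [hKdef]
    simp only [norm_mul, Real.norm_eq_abs, abs_of_nonneg (inv_nonneg.2 ht.le)]
    exact mul_le_mul_of_nonneg_left (SchwartzMap.norm_le_seminorm ℝ ψ _) (inv_nonneg.2 ht.le)
  -- measurability on the product
  have hGm : AEStronglyMeasurable (Function.uncurry G) (ν.prod volume) := by
    have h1 : AEStronglyMeasurable (fun p : ℝ × ℝ => K p.2) (ν.prod volume) :=
      (hKcont.comp continuous_snd).aestronglyMeasurable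
    have h2 : AEStronglyMeasurable (fun p : ℝ × ℝ => f (p.2 / p.1)) (ν.prod volume) :=
      (hfm.comp_measurable (measurable_snd.div measurable_fst)).aestronglyMeasurable
    have h3 : AEStronglyMeasurable (fun p : ℝ × ℝ => φ p.1 / p.1) (ν.prod volume) := by
      simp only [div_eq_mul_inv]
      exact (hφ1.aestronglyMeasurable.mul measurable_inv.aestronglyMeasurable).comp_fst
    exact h1.mul (h2.mul h3)
  -- integrability of the slices
  have hfs : ∀ s : ℝ, 0 < s → Integrable (fun z => G s z) volume := by
    intro s hs
    exact Integrable.bdd_mul (c := t⁻¹ * C) ((hf.comp_div hs.ne').mul_const _)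
      hKcont.aestronglyMeasurable (Filter.Eventually.of_forall hKbd)
  -- integrability on the product
  have hGint : Integrable (Function.uncurry G) (ν.prod volume) := by
    refine (integrable_prod_iff hGm).2 ⟨?_, ?_⟩
    · rw [hν, ae_restrict_iff' measurableSet_Ioi]
      exact Filter.Eventually.of_forall fun s hs => hfs s hs
    · have hb : ∀ s ∈ Set.Ioi (0:ℝ),
          (∫ z, ‖Function.uncurry G (s, z)‖) ≤ (t⁻¹ * C * ∫ w, ‖f w‖) * ‖φ s‖ := by
        intro s hs
        have hs0 : (0:ℝ) < s := hs
        calc (∫ z, ‖Function.uncurry G (s, z)‖)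
            ≤ ∫ z, (t⁻¹ * C) * (‖φ s / s‖ * ‖f (z / s)‖) := by
              refine integral_mono_of_nonneg
                (Filter.Eventually.of_forall fun z => norm_nonneg _)
                ((((hf.comp_div hs0.ne').norm.const_mul _).const_mul _))
                (Filter.Eventually.of_forall fun z => ?_)
              calc ‖Function.uncurry G (s, z)‖ = ‖K z‖ * ‖f (z / s) * (φ s / s)‖ :=
                    norm_mul _ _
                _ ≤ (t⁻¹ * C) * ‖f (z / s) * (φ s / s)‖ :=
                    mul_le_mul_of_nonneg_right (hKbd z) (norm_nonneg _)
                _ = (t⁻¹ * C) * (‖φ s / s‖ * ‖f (z / s)‖) := by rw [norm_mul]; ring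
          _ = (t⁻¹ * C) * (‖φ s / s‖ * (|s| * ∫ w, ‖f w‖)) := by
              rw [integral_const_mul, integral_const_mul,
                Measure.integral_comp_div (fun w => ‖f w‖) s, smul_eq_mul]
          _ = (t⁻¹ * C * ∫ w, ‖f w‖) * ‖φ s‖ := by
              rw [Real.norm_eq_abs, Real.norm_eq_abs, abs_div, abs_of_pos hs0]
              field_simp
      refine Integrable.mono' ((hφ1.norm.const_mul (t⁻¹ * C * ∫ w, ‖f w‖)))
        (hGm.norm.integral_prod_right') ?_
      rw [hν, ae_restrict_iff' measurableSet_Ioi]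
      refine Filter.Eventually.of_forall fun s hs => ?_
      rw [Real.norm_eq_abs, abs_of_nonneg (integral_nonneg fun z => norm_nonneg _)]
      exact hb s hs
  -- Fubini
  have e0 : ∀ z : ℝ, hausdorffOp φ f z * (t⁻¹ * ψ ((y - z) / t)) = ∫ s, G s z ∂ν := by
    intro z
    rw [hausdorffOp, mul_comm]
    exact (integral_const_mul _ _).symm
  have e1 : (∫ z, hausdorffOp φ f z * (t⁻¹ * ψ ((y - z) / t)))
      = ∫ s, (∫ z, G s z) ∂ν := by
    calc (∫ z, hausdorffOp φ f z * (t⁻¹ * ψ ((y - z) / t)))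
        = ∫ z, (∫ s, G s z ∂ν) := by simp only [e0]
      _ = ∫ s, (∫ z, G s z) ∂ν := integral_integral_swap hGint.swap
  -- inner integral evaluation
  have hInner : ∀ s ∈ Set.Ioi (0:ℝ), (∫ z, G s z)
      = (∫ w, f w * ((t/s)⁻¹ * ψ ((y/s - w) / (t/s)))) * (φ s / s) := by
    intro s hs
    have hs0 : (0:ℝ) < s := hs
    have hker : ∀ w : ℝ, K (s * w) = s⁻¹ * ((t/s)⁻¹ * ψ ((y/s - w) / (t/s))) := by
      intro w
      have harg : (y/s - w) / (t/s) = (y - s*w)/t := by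
        field_simp
      rw [hKdef]
      simp only
      rw [harg]
      field_simp
    have h1 : (∫ z, G s z) = (∫ z, K z * f (z / s)) * (φ s / s) := by
      rw [show (fun z => G s z) = fun z => (K z * f (z / s)) * (φ s / s) from
        funext fun z => by rw [hGdef]; ring]
      exact integral_mul_const _ _
    have h2 : (∫ z, K z * f (z / s)) = ∫ w, f w * ((t/s)⁻¹ * ψ ((y/s - w) / (t/s))) := by
      have h3 := Measure.integral_comp_mul_left (fun z => K z * f (z / s)) s
      have e : ∀ w : ℝ, K (s * w) * f (s * w / s)
          = s⁻¹ * (f w * ((t/s)⁻¹ * ψ ((y/s - w) / (t/s)))) := by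
        intro w
        rw [mul_div_cancel_left₀ _ hs0.ne', hker w]
        ring
      rw [funext e, integral_const_mul, smul_eq_mul, abs_of_pos (inv_pos.2 hs0)] at h3
      exact (mul_left_cancel₀ (inv_ne_zero hs0.ne') h3).symm
    rw [h1, h2]
  -- putting things together
  have hIntInt : Integrable (fun s => ∫ z, G s z) ν := hGint.integral_prod_left
  calc ENNReal.ofReal |∫ z, hausdorffOp φ f z * (t⁻¹ * ψ ((y - z) / t))|
      = ENNReal.ofReal |∫ s, (∫ z, G s z) ∂ν| := by rw [e1]
    _ ≤ ENNReal.ofReal (∫ s, |∫ z, G s z| ∂ν) := by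
        refine ENNReal.ofReal_le_ofReal ?_
        simpa [Real.norm_eq_abs] using
          norm_integral_le_integral_norm (μ := ν) (fun s => ∫ z, G s z)
    _ = ∫⁻ s, ENNReal.ofReal |∫ z, G s z| ∂ν := by
        rw [ofReal_integral_eq_lintegral_ofReal]
        · simpa [Real.norm_eq_abs] using hIntInt.norm
        · exact Filter.Eventually.of_forall fun s => abs_nonneg _
    _ ≤ ∫⁻ s in Set.Ioi (0:ℝ), ntMax ψ f (x / s) * ENNReal.ofReal (φ s / s) := by
        rw [← hν]
        refine lintegral_mono_ae ?_
        rw [hν, ae_restrict_iff' measurableSet_Ioi]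
        refine Filter.Eventually.of_forall fun s hs => ?_
        have hs0 : (0:ℝ) < s := hs
        rw [hInner s hs]
        have hc : 0 ≤ φ s / s := div_nonneg (hφ s hs) hs0.le
        rw [abs_mul, abs_of_nonneg hc, ENNReal.ofReal_mul (abs_nonneg _)]
        refine mul_le_mul_left ?_ _
        have hts : 0 < t / s := div_pos ht hs0
        have hxy' : |x/s - y/s| < t/s := by
          rw [div_sub_div_same, abs_div, abs_of_pos hs0]
          gcongr
        exact le_iSup (fun p : {p : ℝ × ℝ // 0 < p.1 ∧ |x/s - p.2| < p.1} =>
          ENNReal.ofReal |∫ z, f z * ((p : ℝ × ℝ).1⁻¹ * ψ (((p : ℝ × ℝ).2 - z) / (p : ℝ × ℝ).1))|)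
          ⟨(t/s, y/s), hts, hxy'⟩

/-- `𝓜_ψ(ℋ_φ f)(x) ≤ ℋ_φ(𝓜_ψ f)(x)` pointwise, and consequently
`∫_ℝ 𝓜_ψ(ℋ_φ f) ≤ (∫₀^∞ φ) ∫_ℝ 𝓜_ψ f`. -/
theorem ntMax_hausdorffOp_le
    (φ : ℝ → ℝ) (hφ : ∀ t ∈ Set.Ioi (0 : ℝ), 0 ≤ φ t)
    (hφ1 : IntegrableOn φ (Set.Ioi 0))
    (ψ : SchwartzMap ℝ ℝ) (f : ℝ → ℝ) (hf : Integrable f) :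
    (∀ x : ℝ, ntMax ψ (hausdorffOp φ f) x
        ≤ ∫⁻ t in Set.Ioi (0 : ℝ), ntMax ψ f (x / t) * ENNReal.ofReal (φ t / t)) ∧
      (∫⁻ x, ntMax ψ (hausdorffOp φ f) x)
        ≤ ENNReal.ofReal (∫ t in Set.Ioi (0 : ℝ), φ t) * ∫⁻ x, ntMax ψ f x := by
  have hfae := hf.1
  set g : ℝ → ℝ := hfae.mk f with hgdef
  have hfg : f =ᵐ[volume] g := hfae.ae_eq_mk
  have hg : StronglyMeasurable g := hfae.stronglyMeasurable_mk
  have hgint : Integrable g := hf.congr hfg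
  have hnt : ntMax ψ f = ntMax ψ g := funext (ntMax_congr ψ hfg)
  have hntH : ntMax ψ (hausdorffOp φ f) = ntMax ψ (hausdorffOp φ g) :=
    funext (ntMax_congr ψ (hausdorffOp_congr_ae φ hfg))
  set M : ℝ → ℝ≥0∞ := ntMax ψ g with hMdef
  have hMm : Measurable M := (ntMax_lsc ψ g).measurable
  set ν : Measure ℝ := volume.restrict (Set.Ioi (0:ℝ)) with hν
  have key : ∀ x : ℝ, ntMax ψ (hausdorffOp φ f) x
      ≤ ∫⁻ s in Set.Ioi (0:ℝ), ntMax ψ f (x / s) * ENNReal.ofReal (φ s / s) := by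
    intro x
    rw [hntH, hnt]
    exact key_pointwise φ hφ hφ1 ψ g hgint hg x
  refine ⟨key, ?_⟩
  rw [hnt]
  have hφae : AEMeasurable (fun s => ENNReal.ofReal (φ s / s)) ν := by
    simp only [div_eq_mul_inv]
    exact ENNReal.measurable_ofReal.comp_aemeasurable
      (hφ1.aemeasurable.mul measurable_inv.aemeasurable)
  calc (∫⁻ x, ntMax ψ (hausdorffOp φ f) x)
      ≤ ∫⁻ x, ∫⁻ s, M (x / s) * ENNReal.ofReal (φ s / s) ∂ν ∂volume := by
        refine lintegral_mono fun x => ?_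
        have := key x
        rwa [hnt] at this
    _ = ∫⁻ s, ∫⁻ x, M (x / s) * ENNReal.ofReal (φ s / s) ∂volume ∂ν := by
        refine lintegral_lintegral_swap ?_
        exact ((hMm.comp (measurable_fst.div measurable_snd)).aemeasurable).mul hφae.comp_snd
    _ = ∫⁻ s, ENNReal.ofReal (φ s) * (∫⁻ x, M x) ∂ν := by
        refine lintegral_congr_ae ?_
        rw [Filter.EventuallyEq, hν, ae_restrict_iff' measurableSet_Ioi]
        refine Filter.Eventually.of_forall fun s hs => ?_
        have hs0 : (0:ℝ) < s := hs
        have h1 : (∫⁻ x, M (x / s) * ENNReal.ofReal (φ s / s) ∂volume)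
            = (∫⁻ x, M (x / s)) * ENNReal.ofReal (φ s / s) :=
          lintegral_mul_const _ (hMm.comp (measurable_id.div_const s))
        have h2 : (∫⁻ x, M (x / s)) = ENNReal.ofReal s * ∫⁻ x, M x := by
          have e : (fun x : ℝ => M (x / s)) = fun x => M (s⁻¹ * x) :=
            funext fun x => by rw [div_eq_inv_mul]
          rw [e, ← lintegral_map hMm (measurable_const_mul s⁻¹),
            Real.map_volume_mul_left (inv_ne_zero hs0.ne'), lintegral_smul_measure,
            inv_inv, abs_of_pos hs0, smul_eq_mul]
        rw [h1, h2, mul_comm (ENNReal.ofReal s) _, mul_assoc,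
          ← ENNReal.ofReal_mul hs0.le,
          show s * (φ s / s) = φ s from by field_simp, mul_comm (∫⁻ x, M x) _]
    _ = (∫⁻ s, ENNReal.ofReal (φ s) ∂ν) * ∫⁻ x, M x := by
        rw [lintegral_mul_const'' _ ?h]
        case h =>
          exact ENNReal.measurable_ofReal.comp_aemeasurable hφ1.aemeasurable
    _ = ENNReal.ofReal (∫ t in Set.Ioi (0:ℝ), φ t) * ∫⁻ x, M x := by
        rw [← ofReal_integral_eq_lintegral_ofReal hφ1]
        exact (ae_restrict_iff' measurableSet_Ioi).2
          (Filter.Eventually.of_forall fun s hs => hφ s hs)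
end

section
/- Let φ be a nonnegative locally integrable function on (0,∞) and let Φ be a Schwartz function on ℝ with ∫_ℝ Φ(x) dx ≠ 0. Suppose the Hausdorff operator ℋ_φ is bounded on H¹(ℝ); that is, there exists C > 0 such that for every f ∈ L¹(ℝ) with ∫_ℝ M_Φ f dx < ∞, the function ℋ_φ f is (a.e. defined and) in L¹(ℝ) and ∫_ℝ M_Φ(ℋ_φ f) dx ≤ C ∫_ℝ M_Φ f dx. Then φ ∈ L¹(0,∞), i.e. ∫₀^∞ φ(t) dt < ∞. -/
open MeasureTheory Set
open scoped ENNReal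

namespace HausdorffAux

noncomputable def af : ℝ → ℝ := fun y =>
  (Set.Ioc (0:ℝ) 1).indicator 1 y - (Set.Ioc (-1:ℝ) 0).indicator 1 y

lemma af_integrable : Integrable af := by
  apply Integrable.sub
  · rw [integrable_indicator_iff measurableSet_Ioc]
    exact integrableOn_const (by simp)
  · rw [integrable_indicator_iff measurableSet_Ioc]
    exact integrableOn_const (by simp)

lemma af_abs_le (y : ℝ) : |af y| ≤ 1 := by
  simp only [af, Set.indicator_apply, Pi.one_apply]
  split_ifs <;> simp

lemma af_mul (h : ℝ → ℝ) (y : ℝ) :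
    af y * h y = (Set.Ioc (0:ℝ) 1).indicator h y - (Set.Ioc (-1:ℝ) 0).indicator h y := by
  simp only [af, Set.indicator_apply, Pi.one_apply]
  split_ifs <;> ring

section estimates
variable (Φ : SchwartzMap ℝ ℝ)

-- integrability of the dilated/translated kernel
lemma kernel_integrable (x t : ℝ) (ht : 0 < t) :
    Integrable (fun y : ℝ => t⁻¹ * Φ ((x - y) / t)) := by
  have h1 : Integrable (fun z : ℝ => Φ (z / t)) := (Φ.integrable (μ := volume)).comp_div ht.ne'
  exact (h1.comp_sub_left x).const_mul _

lemma kernel_L1 (x t : ℝ) (ht : 0 < t) :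
    (∫ y : ℝ, t⁻¹ * |Φ ((x - y) / t)|) = ∫ y : ℝ, |Φ y| := by
  rw [integral_const_mul]
  have h1 : (∫ y : ℝ, |Φ ((x - y) / t)|) = ∫ y : ℝ, |Φ (y / t)| :=
    integral_sub_left_eq_self (fun z : ℝ => |Φ (z / t)|) volume x
  rw [h1, MeasureTheory.Measure.integral_comp_div (fun z : ℝ => |Φ z|) t, smul_eq_mul, abs_of_pos ht]
  field_simp

-- crude bound
lemma bound_one (x t : ℝ) (ht : 0 < t) :
    |∫ y, af y * (t⁻¹ * Φ ((x - y) / t))| ≤ ∫ y : ℝ, |Φ y| := by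
  set h : ℝ → ℝ := fun y => t⁻¹ * Φ ((x - y) / t) with hh
  have hint : Integrable h := kernel_integrable Φ x t ht
  have hprod : Integrable (fun y => af y * h y) := by
    have : (fun y => af y * h y)
        = fun y => (Set.Ioc (0:ℝ) 1).indicator h y - (Set.Ioc (-1:ℝ) 0).indicator h y :=
      funext (af_mul h)
    rw [this]
    exact (hint.indicator measurableSet_Ioc).sub (hint.indicator measurableSet_Ioc)
  calc |∫ y, af y * h y| ≤ ∫ y, |af y| * |h y| := by
        simpa [Real.norm_eq_abs] using
          norm_integral_le_integral_norm (μ := volume) (fun y => af y * h y)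
    _ ≤ ∫ y, t⁻¹ * |Φ ((x - y) / t)| := by
        apply integral_mono (by simpa [abs_mul] using hprod.abs)
        · have : Integrable (fun y => |h y|) := hint.abs
          simpa [hh, abs_mul, abs_of_pos ht, abs_inv] using this
        · intro y
          have h3 : |h y| = t⁻¹ * |Φ ((x - y) / t)| := by
            rw [hh]; rw [abs_mul, abs_inv, abs_of_pos ht]
          calc |af y| * |h y| ≤ 1 * |h y| :=
              mul_le_mul_of_nonneg_right (af_abs_le y) (abs_nonneg _)
            _ = t⁻¹ * |Φ ((x - y) / t)| := by rw [one_mul, h3]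
    _ = ∫ y : ℝ, |Φ y| := kernel_L1 Φ x t ht


-- decay bound for large |x|
lemma bound_two {C₂ : ℝ}
    (hC₂ : ∀ z : ℝ, z ^ 2 * |deriv (⇑Φ) z| ≤ C₂)
    (x t : ℝ) (ht : 0 < t) (hx : 2 ≤ |x|) :
    |∫ y, af y * (t⁻¹ * Φ ((x - y) / t))| ≤ 8 * C₂ / x ^ 2 := by
  set h : ℝ → ℝ := fun y => t⁻¹ * Φ ((x - y) / t) with hh
  have hint : Integrable h := kernel_integrable Φ x t ht
  have hcont : Continuous h := by
    apply continuous_const.mul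
    exact Φ.continuous.comp ((continuous_const.sub continuous_id).div_const t)
  -- rewrite as an interval integral
  have hrw : (∫ y, af y * h y) = ∫ y in (0:ℝ)..1, (h y - h (-y)) := by
    have e1 : (∫ y, af y * h y)
        = (∫ y, (Set.Ioc (0:ℝ) 1).indicator h y) - ∫ y, (Set.Ioc (-1:ℝ) 0).indicator h y := by
      rw [← integral_sub (hint.indicator measurableSet_Ioc) (hint.indicator measurableSet_Ioc)]
      exact integral_congr_ae (Filter.Eventually.of_forall fun y => af_mul h y)
    have e2 : (∫ y, (Set.Ioc (0:ℝ) 1).indicator h y) = ∫ y in (0:ℝ)..1, h y := by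
      rw [integral_indicator measurableSet_Ioc, intervalIntegral.integral_of_le zero_le_one]
    have e3 : (∫ y, (Set.Ioc (-1:ℝ) 0).indicator h y) = ∫ y in (0:ℝ)..1, h (-y) := by
      rw [integral_indicator measurableSet_Ioc,
        ← intervalIntegral.integral_of_le (by norm_num : (-1:ℝ) ≤ 0)]
      rw [intervalIntegral.integral_comp_neg (a := (0:ℝ)) (b := 1) h, neg_zero]
    rw [e1, e2, e3]
    exact (intervalIntegral.integral_sub (hcont.intervalIntegrable _ _)
      ((hcont.comp continuous_neg).intervalIntegrable _ _)).symm
  -- derivative bound on [-1,1]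
  have hx0 : (0:ℝ) < x ^ 2 := by nlinarith [abs_nonneg x, sq_abs x]
  have hC₂0 : 0 ≤ C₂ := le_trans (by norm_num) (hC₂ 0)
  have hdiff : ∀ u ∈ Set.Icc (-1:ℝ) 1, DifferentiableAt ℝ h u := by
    intro u _
    apply DifferentiableAt.const_mul
    exact Φ.differentiableAt.comp u
      (((differentiableAt_const x).sub differentiableAt_fun_id).div_const t)
  have hderiv : ∀ u : ℝ, deriv h u = t⁻¹ * (deriv (⇑Φ) ((x - u) / t) * (-1 / t)) := by
    intro u
    have h1 : HasDerivAt (fun u : ℝ => (x - u) / t) (-1 / t) u := by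
      simpa using ((hasDerivAt_id u).const_sub x).div_const t
    have h2 : HasDerivAt (⇑Φ) (deriv (⇑Φ) ((x - u) / t)) ((x - u) / t) :=
      Φ.differentiableAt.hasDerivAt
    exact ((h2.comp u h1).const_mul t⁻¹).deriv
  have hbd : ∀ u ∈ Set.Icc (-1:ℝ) 1, ‖deriv h u‖ ≤ 4 * C₂ / x ^ 2 := by
    intro u hu
    have hu1 : |u| ≤ 1 := abs_le.2 ⟨hu.1, hu.2⟩
    have hxu : |x| / 2 ≤ |x - u| := by
      have := abs_sub_abs_le_abs_sub x u
      linarith [abs_le.1 hu1]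
    have hxu' : x ^ 2 / 4 ≤ (x - u) ^ 2 := by
      have h0 : 0 ≤ |x| / 2 := by positivity
      nlinarith [sq_abs x, sq_abs (x - u), sq_nonneg (|x - u| - |x| / 2)]
    have hz := hC₂ ((x - u) / t)
    have hz' : (x - u) ^ 2 * |deriv (⇑Φ) ((x - u) / t)| ≤ C₂ * t ^ 2 := by
      have ht2 : (0:ℝ) < t ^ 2 := by positivity
      rw [div_pow] at hz
      calc (x - u) ^ 2 * |deriv (⇑Φ) ((x - u) / t)|
          = ((x - u) ^ 2 / t ^ 2 * |deriv (⇑Φ) ((x - u) / t)|) * t ^ 2 := by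
            field_simp
        _ ≤ C₂ * t ^ 2 := by nlinarith
    rw [hderiv u, Real.norm_eq_abs]
    have habs : |t⁻¹ * (deriv (⇑Φ) ((x - u) / t) * (-1 / t))|
        = |deriv (⇑Φ) ((x - u) / t)| / t ^ 2 := by
      rw [abs_mul, abs_mul, abs_inv, abs_of_pos ht, abs_div, abs_neg, abs_one, abs_of_pos ht]
      ring
    rw [habs, div_le_div_iff₀ (by positivity) hx0]
    nlinarith [abs_nonneg (deriv (⇑Φ) ((x - u) / t))]
  have hkey : ∀ y ∈ Set.uIoc (0:ℝ) 1, ‖h y - h (-y)‖ ≤ 8 * C₂ / x ^ 2 := by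
    intro y hy
    rw [Set.uIoc_of_le zero_le_one] at hy
    have hy1 : y ∈ Set.Icc (-1:ℝ) 1 := ⟨by linarith [hy.1], hy.2⟩
    have hy2 : -y ∈ Set.Icc (-1:ℝ) 1 := ⟨by linarith [hy.2], by linarith [hy.1]⟩
    have := (convex_Icc (-1:ℝ) 1).norm_image_sub_le_of_norm_deriv_le hdiff hbd hy2 hy1
    calc ‖h y - h (-y)‖ ≤ 4 * C₂ / x ^ 2 * ‖y - -y‖ := this
      _ ≤ 4 * C₂ / x ^ 2 * 2 := by
          apply mul_le_mul_of_nonneg_left _ (by positivity)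
          rw [Real.norm_eq_abs]
          rw [abs_le]
          constructor <;> [linarith [hy.1, hy.2]; linarith [hy.1, hy.2]]
      _ = 8 * C₂ / x ^ 2 := by ring
  rw [hrw]
  calc |∫ y in (0:ℝ)..1, (h y - h (-y))| ≤ 8 * C₂ / x ^ 2 * |1 - 0| := by
        simpa [Real.norm_eq_abs] using
          intervalIntegral.norm_integral_le_of_norm_le_const hkey
    _ = 8 * C₂ / x ^ 2 := by norm_num


lemma conv_pointwise : ∃ K : ℝ, 0 ≤ K ∧ ∀ (x t : ℝ), 0 < t →
    |∫ y, af y * (t⁻¹ * Φ ((x - y) / t))| ≤ K * (1 + x ^ 2)⁻¹ := by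
  obtain ⟨C₂, -, hC₂⟩ := (SchwartzMap.derivCLM ℝ ℝ Φ).decay 2 0
  have hC₂' : ∀ z : ℝ, z ^ 2 * |deriv (⇑Φ) z| ≤ C₂ := by
    intro z
    have := hC₂ z
    simpa [norm_iteratedFDeriv_zero, SchwartzMap.derivCLM_apply, Real.norm_eq_abs,
      sq_abs] using this
  have hC₂0 : 0 ≤ C₂ := le_trans (by norm_num) (hC₂' 0)
  set B₁ : ℝ := ∫ y : ℝ, |Φ y| with hB₁
  have hB₁0 : 0 ≤ B₁ := integral_nonneg fun y => abs_nonneg _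
  refine ⟨max (5 * B₁) (16 * C₂), le_trans (by positivity) (le_max_left _ _), ?_⟩
  intro x t ht
  set K := max (5 * B₁) (16 * C₂) with hKdef
  have hpos : (0:ℝ) < 1 + x ^ 2 := by positivity
  rw [← div_eq_mul_inv]
  rcases le_or_gt (|x|) 2 with hx | hx
  · have h1 := bound_one Φ x t ht
    rw [le_div_iff₀ hpos]
    have h5 : 1 + x ^ 2 ≤ 5 := by nlinarith [sq_abs x, sq_nonneg (|x| - 2), abs_nonneg x]
    have hKB : 5 * B₁ ≤ K := le_max_left _ _
    nlinarith [abs_nonneg (∫ y, af y * (t⁻¹ * Φ ((x - y) / t)))]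
  · have h2 := bound_two Φ hC₂' x t ht hx.le
    have hx2 : (1:ℝ) ≤ x ^ 2 := by nlinarith [sq_abs x, abs_nonneg x]
    have hx0 : (0:ℝ) < x ^ 2 := by linarith
    refine le_trans h2 ?_
    rw [div_le_div_iff₀ hx0 hpos]
    have hKC : 16 * C₂ ≤ K := le_max_right _ _
    nlinarith

lemma smoothMax_af_lt_top : (∫⁻ x, smoothMax Φ af x) < ⊤ := by
  obtain ⟨K, hK0, hK⟩ := conv_pointwise Φ
  have hg : Integrable (fun x : ℝ => K * (1 + x ^ 2)⁻¹) :=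
    integrable_inv_one_add_sq.const_mul K
  have hfin := (hasFiniteIntegral_iff_ofReal
    (Filter.Eventually.of_forall fun x => by positivity)).1 hg.2
  refine lt_of_le_of_lt (lintegral_mono fun x => ?_) hfin
  apply iSup_le
  rintro ⟨t, ht⟩
  exact ENNReal.ofReal_le_ofReal (hK x t ht)

end estimates

lemma af_div (x t : ℝ) (hx : 0 < x) (ht : 0 < t) :
    af (x / t) = if x ≤ t then (1:ℝ) else 0 := by
  have hpos : 0 < x / t := div_pos hx ht
  simp only [af, Set.indicator_apply, Pi.one_apply]
  have h2 : x / t ∉ Set.Ioc (-1:ℝ) 0 := fun h => absurd h.2 (not_le.2 hpos)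
  rw [if_neg h2, sub_zero]
  by_cases hxt : x ≤ t
  · rw [if_pos ⟨hpos, (div_le_one ht).2 hxt⟩, if_pos hxt]
  · rw [if_neg, if_neg hxt]
    intro h
    exact hxt ((div_le_one ht).1 h.2)

end HausdorffAux

/-- if `φ ≥ 0` is locally integrable on `(0,∞)` and `ℋ_φ` is bounded on
`H¹(ℝ)`, then `φ ∈ L¹(0,∞)`. -/
theorem integrable_of_hausdorffOp_bounded
    (φ : ℝ → ℝ) (hφ : ∀ t ∈ Set.Ioi (0 : ℝ), 0 ≤ φ t)
    (hφloc : LocallyIntegrableOn φ (Set.Ioi 0))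
    (Φ : SchwartzMap ℝ ℝ) (hΦ : (∫ x, Φ x) ≠ 0)
    (C : ℝ) (hC : 0 < C)
    (hbdd : ∀ f : ℝ → ℝ, Integrable f → (∫⁻ x, smoothMax Φ f x) < ⊤ →
      (∀ᵐ x : ℝ ∂volume, IntegrableOn (fun t => f (x / t) * (φ t / t)) (Set.Ioi 0)) ∧
        Integrable (hausdorffOp φ f) ∧
        (∫⁻ x, smoothMax Φ (hausdorffOp φ f) x)
          ≤ ENNReal.ofReal C * ∫⁻ x, smoothMax Φ f x) :
    IntegrableOn φ (Set.Ioi 0) := by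
  classical
  open HausdorffAux in
  obtain ⟨hae, hint, -⟩ := hbdd HausdorffAux.af HausdorffAux.af_integrable
    (HausdorffAux.smoothMax_af_lt_top Φ)
  set g := hausdorffOp φ HausdorffAux.af with hgdef
  have hmeas : AEMeasurable φ (volume.restrict (Set.Ioi 0)) :=
    hφloc.aestronglyMeasurable.aemeasurable
  set ψ : ℝ → ℝ := hmeas.mk φ with hψdef
  have hψm : Measurable ψ := hmeas.measurable_mk
  have hψe : φ =ᵐ[volume.restrict (Set.Ioi 0)] ψ := hmeas.ae_eq_mk
  set F : ℝ → ℝ → ℝ≥0∞ := fun x t => if x ≤ t then ENNReal.ofReal (ψ t / t) else 0 with hFdef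
  -- Step 1+2 : a.e. x in (0,∞), ofReal (g x) = inner lintegral of F
  have hx_eq : ∀ᵐ x ∂(volume.restrict (Set.Ioi 0)),
      ENNReal.ofReal (g x) = ∫⁻ t in Set.Ioi 0, F x t := by
    filter_upwards [ae_restrict_of_ae hae, ae_restrict_mem measurableSet_Ioi] with x hx hx0
    have h1 : ENNReal.ofReal (g x)
        = ∫⁻ t in Set.Ioi 0, ENNReal.ofReal (HausdorffAux.af (x / t) * (φ t / t)) := by
      apply ofReal_integral_eq_lintegral_ofReal hx
      filter_upwards [ae_restrict_mem measurableSet_Ioi] with t ht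
      rw [HausdorffAux.af_div x t hx0 ht]
      split_ifs with h
      · rw [one_mul]
        exact div_nonneg (hφ t ht) ht.le
      · simp
    rw [h1]
    apply lintegral_congr_ae
    filter_upwards [hψe, ae_restrict_mem measurableSet_Ioi] with t htψ ht
    rw [HausdorffAux.af_div x t hx0 ht]
    by_cases h : x ≤ t <;> simp [hFdef, h, htψ]
  -- Step 3 : finiteness of the double integral
  have hfin : (∫⁻ x in Set.Ioi (0:ℝ), ∫⁻ t in Set.Ioi (0:ℝ), F x t) < ⊤ := by
    calc (∫⁻ x in Set.Ioi (0:ℝ), ∫⁻ t in Set.Ioi (0:ℝ), F x t)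
        = ∫⁻ x in Set.Ioi (0:ℝ), ENNReal.ofReal (g x) := (lintegral_congr_ae hx_eq).symm
      _ ≤ ∫⁻ x in Set.Ioi (0:ℝ), ↑‖g x‖₊ :=
          lintegral_mono fun x => Real.ofReal_le_enorm (g x)
      _ ≤ ∫⁻ x, ↑‖g x‖₊ := setLIntegral_le_lintegral _ _
      _ < ⊤ := hint.hasFiniteIntegral
  -- Step 4 : swap and compute
  have hFm : AEMeasurable (Function.uncurry F)
      ((volume.restrict (Set.Ioi (0:ℝ))).prod (volume.restrict (Set.Ioi (0:ℝ)))) := by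
    apply Measurable.aemeasurable
    apply Measurable.ite (measurableSet_le measurable_fst measurable_snd)
    · exact ENNReal.measurable_ofReal.comp ((hψm.comp measurable_snd).div measurable_snd)
    · exact measurable_const
  have hswap : (∫⁻ x in Set.Ioi (0:ℝ), ∫⁻ t in Set.Ioi (0:ℝ), F x t)
      = ∫⁻ t in Set.Ioi (0:ℝ), ∫⁻ x in Set.Ioi (0:ℝ), F x t := lintegral_lintegral_swap hFm
  have hinner : ∀ t ∈ Set.Ioi (0:ℝ),
      (∫⁻ x in Set.Ioi (0:ℝ), F x t) = ENNReal.ofReal (ψ t / t) * ENNReal.ofReal t := by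
    intro t ht
    have hF : ∀ x, F x t = (Set.Iic t).indicator (fun _ => ENNReal.ofReal (ψ t / t)) x := by
      intro x
      simp only [hFdef, Set.indicator_apply, Set.mem_Iic]
    calc (∫⁻ x in Set.Ioi (0:ℝ), F x t)
        = ∫⁻ x in Set.Ioi (0:ℝ), (Set.Iic t).indicator (fun _ => ENNReal.ofReal (ψ t / t)) x :=
          lintegral_congr fun x => hF x
      _ = ∫⁻ _ in Set.Iic t, ENNReal.ofReal (ψ t / t) ∂(volume.restrict (Set.Ioi 0)) :=
          lintegral_indicator measurableSet_Iic _
      _ = ENNReal.ofReal (ψ t / t) * (volume.restrict (Set.Ioi 0)) (Set.Iic t) :=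
          setLIntegral_const _ _
      _ = ENNReal.ofReal (ψ t / t) * ENNReal.ofReal t := by
          rw [Measure.restrict_apply measurableSet_Iic]
          congr 1
          have : Set.Iic t ∩ Set.Ioi (0:ℝ) = Set.Ioc 0 t := by
            ext y; simp [Set.mem_Ioc, and_comm]
          rw [this, Real.volume_Ioc, sub_zero]
  have hfinal : (∫⁻ t in Set.Ioi (0:ℝ), ENNReal.ofReal (φ t)) < ⊤ := by
    have heq : (∫⁻ t in Set.Ioi (0:ℝ), ENNReal.ofReal (φ t))
        = ∫⁻ t in Set.Ioi (0:ℝ), ∫⁻ x in Set.Ioi (0:ℝ), F x t := by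
      rw [setLIntegral_congr_fun measurableSet_Ioi hinner]
      apply lintegral_congr_ae
      filter_upwards [hψe, ae_restrict_mem measurableSet_Ioi] with t htψ ht
      rw [← htψ, ← ENNReal.ofReal_mul (div_nonneg (hφ t ht) ht.le),
        div_mul_cancel₀ _ (ne_of_gt ht)]
    rw [heq, ← hswap]
    exact hfin
  refine ⟨hφloc.aestronglyMeasurable, ?_⟩
  rw [hasFiniteIntegral_iff_ofReal ?_]
  · exact hfinal
  · filter_upwards [ae_restrict_mem measurableSet_Ioi] with t ht
    exact hφ t ht
end

section
/- Let φ be a nonnegative function in L¹(0,∞), let Φ be a Schwartz function on ℝ with ∫_ℝ Φ(x) dx ≠ 0, and let 0 < δ ≤ 1. Set φ_δ(t) := φ(t)·χ_{[δ,1]}(t). Then for every f ∈ L¹(ℝ) with ∫_ℝ M_Φ f dx < ∞, one has ∫_ℝ M_Φ(ℋ_φ f − ℋ_{φ_δ} f) dx ≤ (∫₀^∞ (φ(t) − φ_δ(t)) dt) · ∫_ℝ M_Φ f dx. -/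
open MeasureTheory Set
open scoped ENNReal

section Aux
open scoped NNReal


lemma my_lintegral_comp_div {g : ℝ → ℝ≥0∞} (hg : Measurable g) {s : ℝ} (hs : 0 < s) :
    ∫⁻ y, g (y / s) = ENNReal.ofReal s * ∫⁻ y, g y := by
  have h0 : (s : ℝ)⁻¹ ≠ 0 := inv_ne_zero hs.ne'
  have h1 : (fun y : ℝ => g (y / s)) = fun y => g (s⁻¹ * y) := by
    ext y; rw [div_eq_inv_mul]
  rw [h1, ← lintegral_map hg (measurable_const_mul s⁻¹),
    Real.map_volume_mul_left h0, inv_inv, lintegral_smul_measure,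
    abs_of_pos hs, smul_eq_mul]

lemma schwartz_bound (Φ : SchwartzMap ℝ ℝ) : ∃ C : ℝ, 0 ≤ C ∧ ∀ x, |Φ x| ≤ C := by
  refine ⟨SchwartzMap.seminorm ℝ 0 0 Φ, apply_nonneg _ _, fun x => ?_⟩
  simpa [Real.norm_eq_abs] using Φ.norm_le_seminorm ℝ x

lemma schwartz_lipschitz (Φ : SchwartzMap ℝ ℝ) : ∃ L : ℝ≥0, LipschitzWith L Φ := by
  refine ⟨(SchwartzMap.seminorm ℝ 0 0 (SchwartzMap.derivCLM ℝ ℝ Φ)).toNNReal,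
    lipschitzWith_of_nnnorm_deriv_le Φ.differentiable fun x => ?_⟩
  rw [← NNReal.coe_le_coe, coe_nnnorm]
  refine le_trans ?_ (Real.le_coe_toNNReal _)
  have h := (SchwartzMap.derivCLM ℝ ℝ Φ).norm_le_seminorm ℝ x
  simpa [SchwartzMap.derivCLM_apply] using h

lemma conv_integrable (Φ : SchwartzMap ℝ ℝ) {f : ℝ → ℝ} (hf : Integrable f)
    {t : ℝ} (ht : 0 < t) (x : ℝ) :
    Integrable fun y => f y * (t⁻¹ * Φ ((x - y) / t)) := by
  obtain ⟨C, hC0, hC⟩ := schwartz_bound Φ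
  have h : Integrable fun y => (t⁻¹ * Φ ((x - y) / t)) * f y := by
    refine hf.bdd_mul (c := t⁻¹ * C) ?_ (Filter.Eventually.of_forall fun y => ?_)
    · exact (continuous_const.mul
        (Φ.continuous.comp ((continuous_const.sub continuous_id).div_const t))).aestronglyMeasurable
    · rw [norm_mul, Real.norm_eq_abs, Real.norm_eq_abs, abs_of_pos (inv_pos.2 ht)]
      exact mul_le_mul_of_nonneg_left (hC _) (le_of_lt (inv_pos.2 ht))
  exact h.congr (Filter.Eventually.of_forall fun y => by ring)

lemma conv_continuous (Φ : SchwartzMap ℝ ℝ) {f : ℝ → ℝ} (hf : Integrable f)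
    {t : ℝ} (ht : 0 < t) :
    Continuous fun x => ∫ y, f y * (t⁻¹ * Φ ((x - y) / t)) := by
  obtain ⟨L, hL⟩ := schwartz_lipschitz Φ
  set c : ℝ := t⁻¹ * ((L : ℝ) / t) * ∫ y, |f y| with hc
  have hc0 : 0 ≤ c := by
    apply mul_nonneg (mul_nonneg (le_of_lt (inv_pos.2 ht)) (div_nonneg L.2 ht.le))
    exact integral_nonneg fun y => abs_nonneg _
  refine (LipschitzWith.of_dist_le_mul (K := c.toNNReal) fun x₁ x₂ => ?_).continuous
  rw [Real.dist_eq, Real.dist_eq, Real.coe_toNNReal _ hc0]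
  have h1 := conv_integrable Φ hf ht x₁
  have h2 := conv_integrable Φ hf ht x₂
  rw [← integral_sub h1 h2]
  have hb : ∀ y : ℝ, |f y * (t⁻¹ * Φ ((x₁ - y) / t)) - f y * (t⁻¹ * Φ ((x₂ - y) / t))|
      ≤ |f y| * (t⁻¹ * ((L : ℝ) / t) * |x₁ - x₂|) := by
    intro y
    have he : f y * (t⁻¹ * Φ ((x₁ - y) / t)) - f y * (t⁻¹ * Φ ((x₂ - y) / t))
        = f y * t⁻¹ * (Φ ((x₁ - y) / t) - Φ ((x₂ - y) / t)) := by ring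
    rw [he, abs_mul, abs_mul, abs_of_pos (inv_pos.2 ht)]
    have hLip : |Φ ((x₁ - y) / t) - Φ ((x₂ - y) / t)| ≤ (L : ℝ) / t * |x₁ - x₂| := by
      have hd := hL.dist_le_mul ((x₁ - y) / t) ((x₂ - y) / t)
      rw [Real.dist_eq, Real.dist_eq] at hd
      calc |Φ ((x₁ - y) / t) - Φ ((x₂ - y) / t)|
          ≤ (L : ℝ) * |(x₁ - y) / t - (x₂ - y) / t| := hd
        _ = (L : ℝ) / t * |x₁ - x₂| := by
            rw [div_sub_div_same, show x₁ - y - (x₂ - y) = x₁ - x₂ by ring, abs_div,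
              abs_of_pos ht]
            ring
    calc |f y| * t⁻¹ * |Φ ((x₁ - y) / t) - Φ ((x₂ - y) / t)|
        ≤ |f y| * t⁻¹ * ((L : ℝ) / t * |x₁ - x₂|) := by
          exact mul_le_mul_of_nonneg_left hLip
            (mul_nonneg (abs_nonneg _) (le_of_lt (inv_pos.2 ht)))
      _ = |f y| * (t⁻¹ * ((L : ℝ) / t) * |x₁ - x₂|) := by ring
  calc |∫ y, (f y * (t⁻¹ * Φ ((x₁ - y) / t)) - f y * (t⁻¹ * Φ ((x₂ - y) / t)))|
      ≤ ∫ y, |f y * (t⁻¹ * Φ ((x₁ - y) / t)) - f y * (t⁻¹ * Φ ((x₂ - y) / t))| := by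
        simpa [Real.norm_eq_abs] using norm_integral_le_integral_norm
          (fun y => f y * (t⁻¹ * Φ ((x₁ - y) / t)) - f y * (t⁻¹ * Φ ((x₂ - y) / t)))
    _ ≤ ∫ y, |f y| * (t⁻¹ * ((L : ℝ) / t) * |x₁ - x₂|) :=
        integral_mono ((h1.sub h2).abs) (hf.abs.mul_const _) fun y => hb y
    _ = c * |x₁ - x₂| := by
        rw [integral_mul_const, hc]; ring

lemma smoothMax_measurable (Φ : SchwartzMap ℝ ℝ) {f : ℝ → ℝ} (hf : Integrable f) :
    Measurable (smoothMax Φ f) := by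
  have h : LowerSemicontinuous (smoothMax Φ f) := by
    apply lowerSemicontinuous_iSup
    intro t
    exact (ENNReal.continuous_ofReal.comp
      ((conv_continuous Φ hf t.2).abs)).lowerSemicontinuous
  exact h.measurable

lemma smoothMax_congr (Φ : SchwartzMap ℝ ℝ) {g h : ℝ → ℝ} (hgh : g =ᵐ[volume] h) (x : ℝ) :
    smoothMax Φ g x = smoothMax Φ h x := by
  unfold smoothMax
  refine iSup_congr fun t => ?_
  congr 1
  refine congrArg _ (integral_congr_ae ?_)
  filter_upwards [hgh] with y hy
  rw [hy]

lemma ae_ae_div_eq {f g : ℝ → ℝ} (hfg : f =ᵐ[volume] g) :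
    ∀ᵐ x : ℝ ∂volume, ∀ᵐ t ∂(volume.restrict (Ioi 0)), f (x / t) = g (x / t) := by
  have h0 : volume {x : ℝ | ¬ f x = g x} = 0 := hfg
  obtain ⟨N, hNsub, hNm, hN0⟩ := exists_measurable_superset_of_null h0
  have hT : (volume.prod (volume.restrict (Ioi (0:ℝ)))) {p : ℝ × ℝ | p.1 / p.2 ∈ N} = 0 := by
    have hTm : MeasurableSet {p : ℝ × ℝ | p.1 / p.2 ∈ N} :=
      (measurable_fst.div measurable_snd) hNm
    rw [Measure.prod_apply_symm hTm]
    have hz : ∀ᵐ t ∂(volume.restrict (Ioi (0:ℝ))),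
        volume ((fun x : ℝ => (x, t)) ⁻¹' {p : ℝ × ℝ | p.1 / p.2 ∈ N}) = 0 := by
      filter_upwards [ae_restrict_mem measurableSet_Ioi] with t ht
      have hset : ((fun x : ℝ => (x, t)) ⁻¹' {p : ℝ × ℝ | p.1 / p.2 ∈ N})
          = (fun x => t⁻¹ * x) ⁻¹' N := by
        ext x; simp [div_eq_inv_mul, mul_comm]
      rw [hset, Real.volume_preimage_mul_left (inv_ne_zero (ne_of_gt ht)), hN0, mul_zero]
    rw [lintegral_congr_ae hz, lintegral_zero]
  have hae : ∀ᵐ p : ℝ × ℝ ∂(volume.prod (volume.restrict (Ioi (0:ℝ)))),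
      f (p.1 / p.2) = g (p.1 / p.2) := by
    rw [Filter.eventually_iff, mem_ae_iff]
    refine measure_mono_null (fun p hp => ?_) hT
    exact hNsub (hp : ¬ f (p.1 / p.2) = g (p.1 / p.2))
  exact Measure.ae_ae_of_ae_prod hae

lemma ae_integrableOn_haus {f φ' : ℝ → ℝ} (hfm : Measurable f) (hf : Integrable f)
    (hφm : Measurable φ') (hφ0 : ∀ t, 0 ≤ φ' t) (hφi : IntegrableOn φ' (Ioi 0)) :
    ∀ᵐ x : ℝ ∂volume, IntegrableOn (fun t => f (x / t) * (φ' t / t)) (Ioi 0) := by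
  have hmeas : Measurable fun p : ℝ × ℝ => f (p.1 / p.2) * (φ' p.2 / p.2) :=
    (hfm.comp (measurable_fst.div measurable_snd)).mul
      ((hφm.comp measurable_snd).div measurable_snd)
  have hint : Integrable (Function.uncurry fun x t => f (x / t) * (φ' t / t))
      (volume.prod (volume.restrict (Ioi (0:ℝ)))) := by
    constructor
    · exact hmeas.aestronglyMeasurable
    · show (∫⁻ p, ‖f (p.1 / p.2) * (φ' p.2 / p.2)‖₊
          ∂(volume.prod (volume.restrict (Ioi (0:ℝ))))) < ⊤
      rw [lintegral_prod_symm _ (hmeas.nnnorm.coe_nnreal_ennreal).aemeasurable]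
      have hbound : ∀ᵐ t ∂(volume.restrict (Ioi (0:ℝ))),
          (∫⁻ x, (‖f (x / t) * (φ' t / t)‖₊ : ℝ≥0∞) ∂volume)
            = ENNReal.ofReal (φ' t) * ∫⁻ y, (‖f y‖₊ : ℝ≥0∞) := by
        filter_upwards [ae_restrict_mem measurableSet_Ioi] with t ht
        have ht' : (0:ℝ) < t := ht
        have heq : ∀ x : ℝ, (‖f (x / t) * (φ' t / t)‖₊ : ℝ≥0∞)
            = ENNReal.ofReal (φ' t / t) * (‖f (x / t)‖₊ : ℝ≥0∞) := by
          intro x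
          rw [nnnorm_mul, ENNReal.coe_mul, mul_comm]
          congr 1
          exact Real.enorm_eq_ofReal (div_nonneg (hφ0 t) ht'.le)
        simp only [heq]
        have hm1 : Measurable fun x : ℝ => (‖f (x / t)‖₊ : ℝ≥0∞) :=
          (hfm.comp (measurable_id.div_const t)).nnnorm.coe_nnreal_ennreal
        rw [lintegral_const_mul _ hm1,
          my_lintegral_comp_div (hfm.nnnorm.coe_nnreal_ennreal) ht', ← mul_assoc,
          ← ENNReal.ofReal_mul (div_nonneg (hφ0 t) ht'.le),
          div_mul_cancel₀ _ (ne_of_gt ht')]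
      rw [lintegral_congr_ae hbound,
        lintegral_mul_const _ hφm.ennreal_ofReal]
      apply ENNReal.mul_lt_top
      · rw [← ofReal_integral_eq_lintegral_ofReal hφi
          (Filter.Eventually.of_forall fun t => hφ0 t)]
        exact ENNReal.ofReal_lt_top
      · exact hf.2
  exact hint.prod_right_ae

lemma key_estimate (Φ : SchwartzMap ℝ ℝ) {f ψ : ℝ → ℝ} (hfm : Measurable f)
    (hf : Integrable f) (hψm : Measurable ψ) (hψ0 : ∀ t, 0 ≤ ψ t)
    (hψi : IntegrableOn ψ (Ioi 0)) :
    (∫⁻ x, smoothMax Φ (hausdorffOp ψ f) x)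
      ≤ ENNReal.ofReal (∫ t in Set.Ioi (0:ℝ), ψ t) * ∫⁻ x, smoothMax Φ f x := by
  obtain ⟨C, hC0, hC⟩ := schwartz_bound Φ
  have hM : Measurable (smoothMax Φ f) := smoothMax_measurable Φ hf
  have step1 : ∀ x : ℝ, smoothMax Φ (hausdorffOp ψ f) x
      ≤ ∫⁻ s in Ioi (0:ℝ), ENNReal.ofReal (ψ s / s) * smoothMax Φ f (x / s) := by
    intro x
    refine iSup_le ?_
    rintro ⟨t, ht⟩
    show ENNReal.ofReal |∫ y, hausdorffOp ψ f y * (t⁻¹ * Φ ((x - y) / t))| ≤ _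
    set H : ℝ → ℝ → ℝ :=
      fun s y => (f (y / s) * (ψ s / s)) * (t⁻¹ * Φ ((x - y) / t)) with hH
    have hHmeas : Measurable (Function.uncurry H) := by
      apply Measurable.mul
      · exact (hfm.comp (measurable_snd.div measurable_fst)).mul
          ((hψm.comp measurable_fst).div measurable_fst)
      · exact (Φ.continuous.measurable.comp
          ((measurable_const.sub measurable_snd).div_const t)).const_mul t⁻¹
    have hHint : Integrable (Function.uncurry H)
        ((volume.restrict (Ioi (0:ℝ))).prod volume) := by
      constructor
      · exact hHmeas.aestronglyMeasurable
      · show (∫⁻ p, ‖Function.uncurry H p‖₊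
            ∂((volume.restrict (Ioi (0:ℝ))).prod volume)) < ⊤
        rw [lintegral_prod _ (hHmeas.nnnorm.coe_nnreal_ennreal).aemeasurable]
        have hbound : ∀ᵐ s ∂(volume.restrict (Ioi (0:ℝ))),
            (∫⁻ y, (‖H s y‖₊ : ℝ≥0∞) ∂volume)
              ≤ ENNReal.ofReal (ψ s)
                * (ENNReal.ofReal (t⁻¹ * C) * ∫⁻ y, (‖f y‖₊ : ℝ≥0∞)) := by
          filter_upwards [ae_restrict_mem measurableSet_Ioi] with s hs
          have hs' : (0:ℝ) < s := hs
          have hpt : ∀ y : ℝ, (‖H s y‖₊ : ℝ≥0∞)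
              ≤ (ENNReal.ofReal (ψ s / s) * ENNReal.ofReal (t⁻¹ * C))
                * (‖f (y / s)‖₊ : ℝ≥0∞) := by
            intro y
            rw [← enorm_eq_nnnorm, ← enorm_eq_nnnorm, Real.enorm_eq_ofReal_abs, Real.enorm_eq_ofReal_abs,
              ← ENNReal.ofReal_mul (div_nonneg (hψ0 s) hs'.le),
              ← ENNReal.ofReal_mul (mul_nonneg (div_nonneg (hψ0 s) hs'.le)
                (mul_nonneg (inv_pos.2 ht).le hC0))]
            apply ENNReal.ofReal_le_ofReal
            have habs : |H s y| = |f (y / s)| * (ψ s / s) * (t⁻¹ * |Φ ((x - y) / t)|) := by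
              rw [hH]
              simp only [abs_mul, abs_of_nonneg (div_nonneg (hψ0 s) hs'.le),
                abs_of_pos (inv_pos.2 ht)]
            rw [habs]
            calc |f (y / s)| * (ψ s / s) * (t⁻¹ * |Φ ((x - y) / t)|)
                ≤ |f (y / s)| * (ψ s / s) * (t⁻¹ * C) := by
                  gcongr
                  · exact mul_nonneg (abs_nonneg _) (div_nonneg (hψ0 s) hs'.le)
                  · exact hC _
              _ = ψ s / s * (t⁻¹ * C) * |f (y / s)| := by ring
          calc (∫⁻ y, (‖H s y‖₊ : ℝ≥0∞))
              ≤ ∫⁻ y, (ENNReal.ofReal (ψ s / s) * ENNReal.ofReal (t⁻¹ * C))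
                  * (‖f (y / s)‖₊ : ℝ≥0∞) := lintegral_mono hpt
            _ = (ENNReal.ofReal (ψ s / s) * ENNReal.ofReal (t⁻¹ * C))
                  * ∫⁻ y, (‖f (y / s)‖₊ : ℝ≥0∞) := lintegral_const_mul _
                  ((hfm.comp (measurable_id.div_const s)).nnnorm.coe_nnreal_ennreal)
            _ = (ENNReal.ofReal (ψ s / s) * ENNReal.ofReal (t⁻¹ * C))
                  * (ENNReal.ofReal s * ∫⁻ y, (‖f y‖₊ : ℝ≥0∞)) := by
                rw [my_lintegral_comp_div (hfm.nnnorm.coe_nnreal_ennreal) hs']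
            _ = (ENNReal.ofReal (ψ s / s) * ENNReal.ofReal s)
                  * (ENNReal.ofReal (t⁻¹ * C) * ∫⁻ y, (‖f y‖₊ : ℝ≥0∞)) := by ring
            _ = ENNReal.ofReal (ψ s)
                  * (ENNReal.ofReal (t⁻¹ * C) * ∫⁻ y, (‖f y‖₊ : ℝ≥0∞)) := by
                rw [← ENNReal.ofReal_mul (div_nonneg (hψ0 s) hs'.le),
                  div_mul_cancel₀ _ (ne_of_gt hs')]
        calc (∫⁻ s in Ioi (0:ℝ), ∫⁻ y, (‖H s y‖₊ : ℝ≥0∞))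
            ≤ ∫⁻ s in Ioi (0:ℝ), ENNReal.ofReal (ψ s)
                * (ENNReal.ofReal (t⁻¹ * C) * ∫⁻ y, (‖f y‖₊ : ℝ≥0∞)) :=
              lintegral_mono_ae hbound
          _ = (∫⁻ s in Ioi (0:ℝ), ENNReal.ofReal (ψ s))
                * (ENNReal.ofReal (t⁻¹ * C) * ∫⁻ y, (‖f y‖₊ : ℝ≥0∞)) :=
              lintegral_mul_const _ hψm.ennreal_ofReal
          _ < ⊤ := by
              apply ENNReal.mul_lt_top
              · rw [← ofReal_integral_eq_lintegral_ofReal hψi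
                  (Filter.Eventually.of_forall hψ0)]
                exact ENNReal.ofReal_lt_top
              · exact ENNReal.mul_lt_top ENNReal.ofReal_lt_top hf.2
    set convf : ℝ → ℝ :=
      fun s => ∫ u, f u * ((t / s)⁻¹ * Φ ((x / s - u) / (t / s))) with hconvf
    have hinner : ∀ s ∈ Ioi (0:ℝ), (∫ y, H s y) = (ψ s / s) * convf s := by
      intro s hs
      have hs' : (0:ℝ) < s := hs
      have e1 : ∀ y : ℝ, H s y = (ψ s / s) * (f (y / s) * (t⁻¹ * Φ ((x - y) / t))) := by
        intro y; rw [hH]; ring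
      simp only [e1]
      rw [integral_const_mul]
      congr 1
      have e2 : (fun y : ℝ => f (y / s) * (t⁻¹ * Φ ((x - y) / t)))
          = fun y => (fun u => f u * (t⁻¹ * Φ ((x - s * u) / t))) (y / s) := by
        funext y
        simp only []
        rw [show s * (y / s) = y by field_simp]
      rw [e2, MeasureTheory.Measure.integral_comp_div
        (fun u => f u * (t⁻¹ * Φ ((x - s * u) / t))) s,
        abs_of_pos hs', smul_eq_mul]
      have e3 : (fun u : ℝ => f u * (t⁻¹ * Φ ((x - s * u) / t)))
          = fun u => s⁻¹ * (f u * ((t / s)⁻¹ * Φ ((x / s - u) / (t / s)))) := by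
        funext u
        have harg : (x - s * u) / t = (x / s - u) / (t / s) := by
          field_simp
        rw [harg, inv_div]
        field_simp
      rw [e3, integral_const_mul, ← mul_assoc, mul_inv_cancel₀ (ne_of_gt hs'), one_mul]
    have hfub : (∫ y, hausdorffOp ψ f y * (t⁻¹ * Φ ((x - y) / t)))
        = ∫ s in Ioi (0:ℝ), (ψ s / s) * convf s := by
      have e : (fun y : ℝ => hausdorffOp ψ f y * (t⁻¹ * Φ ((x - y) / t)))
          = fun y => ∫ s in Ioi (0:ℝ), H s y := by
        funext y
        show (∫ s in Ioi (0:ℝ), f (y / s) * (ψ s / s)) * (t⁻¹ * Φ ((x - y) / t)) = _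
        exact (integral_mul_const _ _).symm
      rw [e, (integral_integral_swap hHint).symm]
      refine integral_congr_ae ?_
      filter_upwards [ae_restrict_mem measurableSet_Ioi] with s hs
      exact hinner s hs
    have hGint : Integrable (fun s => (ψ s / s) * convf s)
        (volume.restrict (Ioi (0:ℝ))) := by
      refine hHint.integral_prod_left.congr ?_
      filter_upwards [ae_restrict_mem measurableSet_Ioi] with s hs
      exact hinner s hs
    calc ENNReal.ofReal |∫ y, hausdorffOp ψ f y * (t⁻¹ * Φ ((x - y) / t))|
        = ENNReal.ofReal |∫ s in Ioi (0:ℝ), (ψ s / s) * convf s| := by rw [hfub]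
      _ ≤ ENNReal.ofReal (∫ s in Ioi (0:ℝ), |(ψ s / s) * convf s|) :=
          ENNReal.ofReal_le_ofReal (by
            have h := norm_integral_le_integral_norm
              (μ := volume.restrict (Ioi (0:ℝ))) (fun s => (ψ s / s) * convf s)
            simp only [Real.norm_eq_abs] at h
            exact h)
      _ = ∫⁻ s in Ioi (0:ℝ), ENNReal.ofReal |(ψ s / s) * convf s| :=
          ofReal_integral_eq_lintegral_ofReal hGint.abs
            (Filter.Eventually.of_forall fun s => abs_nonneg _)
      _ ≤ ∫⁻ s in Ioi (0:ℝ), ENNReal.ofReal (ψ s / s) * smoothMax Φ f (x / s) := by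
          refine lintegral_mono_ae ?_
          filter_upwards [ae_restrict_mem measurableSet_Ioi] with s hs
          have hs' : (0:ℝ) < s := hs
          rw [abs_mul, abs_of_nonneg (div_nonneg (hψ0 s) hs'.le),
            ENNReal.ofReal_mul (div_nonneg (hψ0 s) hs'.le)]
          refine mul_le_mul_right ?_ _
          simp only [smoothMax]
          exact le_iSup_of_le ⟨t / s, div_pos ht hs'⟩ le_rfl
  calc (∫⁻ x, smoothMax Φ (hausdorffOp ψ f) x)
      ≤ ∫⁻ x, ∫⁻ s in Ioi (0:ℝ), ENNReal.ofReal (ψ s / s) * smoothMax Φ f (x / s) :=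
        lintegral_mono step1
    _ = ∫⁻ s in Ioi (0:ℝ), ∫⁻ x, ENNReal.ofReal (ψ s / s) * smoothMax Φ f (x / s) := by
        refine lintegral_lintegral_swap ?_
        exact (((hψm.comp measurable_snd).div measurable_snd).ennreal_ofReal.mul
          (hM.comp (measurable_fst.div measurable_snd))).aemeasurable
    _ = ∫⁻ s in Ioi (0:ℝ), ENNReal.ofReal (ψ s) * ∫⁻ x, smoothMax Φ f x := by
        refine lintegral_congr_ae ?_
        filter_upwards [ae_restrict_mem measurableSet_Ioi] with s hs
        have hs' : (0:ℝ) < s := hs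
        have hm2 : Measurable fun x : ℝ => smoothMax Φ f (x / s) :=
          hM.comp (measurable_id.div_const s)
        rw [lintegral_const_mul _ hm2,
          my_lintegral_comp_div hM hs', ← mul_assoc,
          ← ENNReal.ofReal_mul (div_nonneg (hψ0 s) hs'.le),
          div_mul_cancel₀ _ (ne_of_gt hs')]
    _ = (∫⁻ s in Ioi (0:ℝ), ENNReal.ofReal (ψ s)) * ∫⁻ x, smoothMax Φ f x :=
        lintegral_mul_const _ hψm.ennreal_ofReal
    _ = ENNReal.ofReal (∫ t in Set.Ioi (0:ℝ), ψ t) * ∫⁻ x, smoothMax Φ f x := by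
        rw [ofReal_integral_eq_lintegral_ofReal hψi (Filter.Eventually.of_forall hψ0)]

end Aux

/-- with `φ_δ := φ·χ_{[δ,1]}`, one has
`∫_ℝ M_Φ(ℋ_φ f − ℋ_{φ_δ} f) ≤ (∫₀^∞ (φ − φ_δ)) ∫_ℝ M_Φ f` for every `f ∈ H¹(ℝ)`. -/
theorem smoothMax_hausdorffOp_truncation
    (φ : ℝ → ℝ) (hφ : ∀ t ∈ Set.Ioi (0 : ℝ), 0 ≤ φ t)
    (hφ1 : IntegrableOn φ (Set.Ioi 0))
    (Φ : SchwartzMap ℝ ℝ) (hΦ : (∫ x, Φ x) ≠ 0)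
    (δ : ℝ) (hδ : 0 < δ) (hδ1 : δ ≤ 1)
    (f : ℝ → ℝ) (hf : Integrable f) (hfH : (∫⁻ x, smoothMax Φ f x) < ⊤) :
    (∫⁻ x, smoothMax Φ
        (fun x => hausdorffOp φ f x - hausdorffOp ((Set.Icc δ 1).indicator φ) f x) x)
      ≤ ENNReal.ofReal (∫ t in Set.Ioi (0 : ℝ), (φ t - (Set.Icc δ 1).indicator φ t)) *
          ∫⁻ x, smoothMax Φ f x := by
  classical
  -- measurable representative of f
  obtain ⟨g, hgm, hfg⟩ : ∃ g : ℝ → ℝ, Measurable g ∧ f =ᵐ[volume] g :=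
    ⟨hf.1.mk f, hf.1.stronglyMeasurable_mk.measurable, hf.1.ae_eq_mk⟩
  have hg : Integrable g := hf.congr hfg
  -- measurable nonnegative representative of φ
  obtain ⟨φ₀, hφ₀m, hφφ₀⟩ : ∃ φ₀ : ℝ → ℝ, Measurable φ₀ ∧
      φ =ᵐ[volume.restrict (Ioi 0)] φ₀ :=
    ⟨hφ1.1.mk φ, hφ1.1.stronglyMeasurable_mk.measurable, hφ1.1.ae_eq_mk⟩
  set φ' : ℝ → ℝ := fun t => max (φ₀ t) 0 with hφ'def
  have hφ'm : Measurable φ' := hφ₀m.max measurable_const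
  have hφ'0 : ∀ t, 0 ≤ φ' t := fun t => le_max_right _ _
  have hφφ' : φ =ᵐ[volume.restrict (Ioi (0:ℝ))] φ' := by
    filter_upwards [hφφ₀, ae_restrict_mem measurableSet_Ioi] with t h1 h2
    rw [hφ'def]
    simp only []
    rw [← h1, max_eq_left (hφ t h2)]
  have hφ'i : IntegrableOn φ' (Ioi 0) := (integrable_congr hφφ').mp hφ1
  set χ : ℝ → ℝ := (Icc δ 1).indicator φ' with hχdef
  have hχm : Measurable χ := hφ'm.indicator measurableSet_Icc
  have hχ0 : ∀ t, 0 ≤ χ t := fun t => Set.indicator_nonneg (fun a _ => hφ'0 a) t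
  have hχle : ∀ t, χ t ≤ φ' t := fun t =>
    Set.indicator_le_self' (fun a _ => hφ'0 a) t
  set ψ : ℝ → ℝ := fun t => φ' t - χ t with hψdef
  have hψm : Measurable ψ := hφ'm.sub hχm
  have hψ0 : ∀ t, 0 ≤ ψ t := fun t => sub_nonneg.2 (hχle t)
  have hχi : IntegrableOn χ (Ioi 0) := by
    refine Integrable.mono hφ'i hχm.aestronglyMeasurable ?_
    refine Filter.Eventually.of_forall fun t => ?_
    rw [Real.norm_eq_abs, Real.norm_eq_abs, abs_of_nonneg (hχ0 t), abs_of_nonneg (hφ'0 t)]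
    exact hχle t
  have hψi : IntegrableOn ψ (Ioi 0) := hφ'i.sub hχi
  -- indicator congruence
  have hindic : ∀ t : ℝ, φ t = φ' t → (Icc δ 1).indicator φ t = χ t := by
    intro t h
    rw [hχdef]
    by_cases hmem : t ∈ Icc δ 1
    · rw [Set.indicator_of_mem hmem, Set.indicator_of_mem hmem, h]
    · rw [Set.indicator_of_notMem hmem, Set.indicator_of_notMem hmem]
  -- RHS integral rewriting
  have hRHS : (∫ t in Set.Ioi (0:ℝ), (φ t - (Set.Icc δ 1).indicator φ t))
      = ∫ t in Set.Ioi (0:ℝ), ψ t := by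
    refine integral_congr_ae ?_
    filter_upwards [hφφ'] with t h
    rw [hψdef]
    simp only []
    rw [h, hindic t h]
  -- LHS function is a.e. equal to hausdorffOp ψ g
  have hstep1 : ∀ x : ℝ, hausdorffOp φ f x = hausdorffOp φ' f x := by
    intro x
    refine integral_congr_ae ?_
    filter_upwards [hφφ'] with t h
    rw [h]
  have hstep2 : ∀ x : ℝ, hausdorffOp ((Set.Icc δ 1).indicator φ) f x = hausdorffOp χ f x := by
    intro x
    refine integral_congr_ae ?_
    filter_upwards [hφφ'] with t h
    rw [hindic t h]
  have hfun : (fun x => hausdorffOp φ f x - hausdorffOp ((Set.Icc δ 1).indicator φ) f x)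
      =ᵐ[volume] hausdorffOp ψ g := by
    have hae1 := ae_ae_div_eq hfg
    have hae2 := ae_integrableOn_haus hgm hg hφ'm hφ'0 hφ'i
    filter_upwards [hae1, hae2] with x hx hxint
    rw [hstep1 x, hstep2 x]
    have hφ'fg : hausdorffOp φ' f x = hausdorffOp φ' g x := by
      refine integral_congr_ae ?_
      filter_upwards [hx] with t h
      rw [h]
    have hχfg : hausdorffOp χ f x = hausdorffOp χ g x := by
      refine integral_congr_ae ?_
      filter_upwards [hx] with t h
      rw [h]
    rw [hφ'fg, hχfg]
    have hxint2 : IntegrableOn (fun t => g (x / t) * (χ t / t)) (Ioi 0) := by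
      refine Integrable.mono hxint ?_ ?_
      · refine ((hgm.comp (measurable_const.div measurable_id)).mul
          (hχm.div measurable_id)).aestronglyMeasurable
      · filter_upwards [ae_restrict_mem measurableSet_Ioi] with t ht
        have ht' : (0:ℝ) < t := ht
        rw [Real.norm_eq_abs, Real.norm_eq_abs, abs_mul, abs_mul]
        refine mul_le_mul_of_nonneg_left ?_ (abs_nonneg _)
        rw [abs_div, abs_div, abs_of_pos ht', abs_of_nonneg (hχ0 t),
          abs_of_nonneg (hφ'0 t), div_eq_mul_inv, div_eq_mul_inv]
        exact mul_le_mul_of_nonneg_right (hχle t) (inv_nonneg.2 ht'.le)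
    show hausdorffOp φ' g x - hausdorffOp χ g x = hausdorffOp ψ g x
    rw [hausdorffOp, hausdorffOp, hausdorffOp, ← integral_sub hxint hxint2]
    refine integral_congr_ae (Filter.Eventually.of_forall fun t => ?_)
    rw [hψdef]
    simp only []
    ring
  calc (∫⁻ x, smoothMax Φ
        (fun x => hausdorffOp φ f x - hausdorffOp ((Set.Icc δ 1).indicator φ) f x) x)
      = ∫⁻ x, smoothMax Φ (hausdorffOp ψ g) x :=
        lintegral_congr fun x => smoothMax_congr Φ hfun x
    _ ≤ ENNReal.ofReal (∫ t in Set.Ioi (0:ℝ), ψ t) * ∫⁻ x, smoothMax Φ g x :=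
        key_estimate Φ hgm hg hψm hψ0 hψi
    _ = ENNReal.ofReal (∫ t in Set.Ioi (0 : ℝ), (φ t - (Set.Icc δ 1).indicator φ t)) *
          ∫⁻ x, smoothMax Φ f x := by
        rw [hRHS, lintegral_congr fun x => smoothMax_congr Φ hfg x]
end

section
/- Let φ be a nonnegative function in L¹(0,∞) supported in [δ,1] for some 0 < δ ≤ 1, let ε > 0, and let f_ε(x) := (x+i)^{−(1+ε)} (principal-branch complex power). Then ℋ_φ f_ε(x) = ∫_δ^1 (t^ε/(x + ti)^{1+ε}) φ(t) dt for every x ∈ ℝ, and ℋ_φ f_ε − (∫₀^∞ φ(t) dt)·f_ε ∈ L¹(ℝ) with ‖ℋ_φ f_ε − (∫₀^∞ φ dt)·f_ε‖_{L¹(ℝ)} ≤ (∫_δ^1 φ(t) dt) · ∫_ℝ [ε δ^{−2}(x²+1)^{−(1+ε)/2} + (1+ε) δ^{−2}(x²+1)^{−(2+ε)/2}] dx. -/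
open MeasureTheory Set Complex
open scoped ENNReal

lemma aux_cpow_norm (x s p : ℝ) : ‖((x:ℂ)+s*I) ^ ((p:ℝ):ℂ)‖ = (x^2+s^2) ^ (p/2) := by
  rw [Complex.norm_cpow_real, Complex.norm_add_mul_I, Real.sqrt_eq_rpow,
    ← Real.rpow_mul (by positivity)]
  congr 1; ring

lemma aux_rnorm {s : ℝ} (hs : 0 < s) (p : ℝ) : ‖(s:ℂ) ^ ((p:ℝ):ℂ)‖ = s ^ p := by
  rw [Complex.norm_cpow_real, Complex.norm_real, Real.norm_eq_abs, abs_of_pos hs]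

lemma aux_est {x δ s : ℝ} (hδ : 0 < δ)
    (hs1 : δ ≤ s) (hs2 : s ≤ 1) (q p : ℝ) (hqp : q + (-(2*p)) = -2) (hp : 0 ≤ p) :
    s ^ q * (x^2+s^2) ^ (-p) ≤ δ ^ (-2 : ℝ) * (x^2+1) ^ (-p) := by
  have hs : 0 < s := hδ.trans_le hs1
  have key : (x^2+s^2) ^ (-p) ≤ s ^ (-(2*p)) * (x^2+1) ^ (-p) := by
    have hss : s^2 ≤ 1 := by nlinarith
    have h1 : s^2 * (x^2+1) ≤ x^2 + s^2 := by nlinarith [sq_nonneg x]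
    have h2 : (x^2+s^2) ^ (-p) ≤ (s^2 * (x^2+1)) ^ (-p) :=
      Real.rpow_le_rpow_of_nonpos (by positivity) h1 (by linarith)
    calc (x^2+s^2) ^ (-p) ≤ (s^2 * (x^2+1)) ^ (-p) := h2
      _ = (s^2) ^ (-p) * (x^2+1) ^ (-p) := Real.mul_rpow (by positivity) (by positivity)
      _ = s ^ (-(2*p)) * (x^2+1) ^ (-p) := by
          rw [← Real.rpow_natCast s 2, ← Real.rpow_mul hs.le]
          norm_num
  calc s ^ q * (x^2+s^2) ^ (-p) ≤ s ^ q * (s ^ (-(2*p)) * (x^2+1) ^ (-p)) := by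
        apply mul_le_mul_of_nonneg_left key (Real.rpow_nonneg hs.le q)
    _ = s ^ (-2 : ℝ) * (x^2+1) ^ (-p) := by
        rw [← mul_assoc, ← Real.rpow_add hs, hqp]
    _ ≤ δ ^ (-2 : ℝ) * (x^2+1) ^ (-p) := by
        apply mul_le_mul_of_nonneg_right
          (Real.rpow_le_rpow_of_nonpos hδ hs1 (by norm_num)) (Real.rpow_nonneg (by positivity) _)

lemma aux_deriv (x ε s : ℝ) (hs : 0 < s) :
    HasDerivAt (fun s : ℝ => (s:ℂ)^(ε:ℂ) * ((x:ℂ) + s*I) ^ (-(1+(ε:ℂ))))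
      ((ε:ℂ) * (s:ℂ)^((ε:ℂ)-1) * 1 * ((x:ℂ) + s*I) ^ (-(1+(ε:ℂ)))
        + (s:ℂ)^(ε:ℂ) * (-(1+(ε:ℂ)) * ((x:ℂ) + s*I) ^ (-(1+(ε:ℂ))-1) * (1*I))) s := by
  have h0 : ((s:ℝ):ℂ) ∈ Complex.slitPlane := Or.inl (by simpa using hs)
  have h1 : HasDerivAt (fun w : ℂ => w ^ (ε:ℂ)) ((ε:ℂ) * (s:ℂ)^((ε:ℂ)-1) * 1) (s:ℂ) :=
    (hasDerivAt_id _).cpow_const h0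
  have h2 : HasDerivAt (fun w : ℂ => (x:ℂ) + w * I) (1*I) (s:ℂ) :=
    ((hasDerivAt_id _).mul_const I).const_add _
  have h2' : HasDerivAt (fun w : ℂ => ((x:ℂ)+w*I) ^ (-(1+(ε:ℂ))))
      (-(1+(ε:ℂ)) * ((x:ℂ)+(s:ℂ)*I)^(-(1+(ε:ℂ))-1) * (1*I)) (s:ℂ) :=
    h2.cpow_const (Or.inr (by simpa using hs.ne'))
  exact h1.comp_ofReal.mul h2'.comp_ofReal

lemma aux_deriv_norm {x ε s δ : ℝ} (hε : 0 < ε) (hδ : 0 < δ) (hs1 : δ ≤ s) (hs2 : s ≤ 1) :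
    ‖(ε:ℂ) * (s:ℂ)^((ε:ℂ)-1) * 1 * ((x:ℂ) + s*I) ^ (-(1+(ε:ℂ)))
        + (s:ℂ)^(ε:ℂ) * (-(1+(ε:ℂ)) * ((x:ℂ) + s*I) ^ (-(1+(ε:ℂ))-1) * (1*I))‖
      ≤ ε * δ ^ (-2:ℝ) * (x^2+1) ^ (-((1+ε)/2)) + (1+ε) * δ ^ (-2:ℝ) * (x^2+1) ^ (-((2+ε)/2)) := by
  have hs : 0 < s := hδ.trans_le hs1
  have e1 : ((ε:ℂ)-1) = ((ε-1 : ℝ):ℂ) := by push_cast; ring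
  have e2 : (-(1+(ε:ℂ))) = ((-(1+ε) : ℝ):ℂ) := by push_cast; ring
  have e3 : (-(1+(ε:ℂ))-1) = ((-(2+ε) : ℝ):ℂ) := by push_cast; ring
  have step1 : ‖(ε:ℂ) * (s:ℂ)^((ε:ℂ)-1) * 1 * ((x:ℂ) + s*I) ^ (-(1+(ε:ℂ)))
        + (s:ℂ)^(ε:ℂ) * (-(1+(ε:ℂ)) * ((x:ℂ) + s*I) ^ (-(1+(ε:ℂ))-1) * (1*I))‖
      ≤ ε * (s ^ (ε-1) * (x^2+s^2) ^ (-((1+ε)/2)))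
        + (1+ε) * (s ^ ε * (x^2+s^2) ^ (-((2+ε)/2))) := by
    refine (norm_add_le _ _).trans (le_of_eq ?_)
    rw [e1, e3, e2]
    simp only [norm_mul, norm_one, Complex.norm_I, one_mul, mul_one]
    rw [aux_cpow_norm, aux_cpow_norm, aux_rnorm hs, aux_rnorm hs]
    rw [show ‖(ε:ℂ)‖ = ε by rw [Complex.norm_real, Real.norm_eq_abs, abs_of_pos hε]]
    rw [show ‖((-(1+ε):ℝ):ℂ)‖ = 1+ε by
      rw [Complex.norm_real, Real.norm_eq_abs, abs_neg, abs_of_pos (by linarith)]]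
    rw [show (-(1+ε))/2 = -((1+ε)/2) by ring, show (-(2+ε))/2 = -((2+ε)/2) by ring]
    ring
  refine step1.trans ?_
  have t1 := aux_est (x := x) hδ hs1 hs2 (ε-1) ((1+ε)/2) (by ring) (by linarith)
  have t2 := aux_est (x := x) hδ hs1 hs2 ε ((2+ε)/2) (by ring) (by linarith)
  have := mul_le_mul_of_nonneg_left t1 hε.le
  have := mul_le_mul_of_nonneg_left t2 (by linarith : (0:ℝ) ≤ 1+ε)
  calc ε * (s ^ (ε-1) * (x^2+s^2) ^ (-((1+ε)/2)))
        + (1+ε) * (s ^ ε * (x^2+s^2) ^ (-((2+ε)/2)))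
      ≤ ε * (δ ^ (-2:ℝ) * (x^2+1) ^ (-((1+ε)/2)))
        + (1+ε) * (δ ^ (-2:ℝ) * (x^2+1) ^ (-((2+ε)/2))) := by
        gcongr
    _ = ε * δ ^ (-2:ℝ) * (x^2+1) ^ (-((1+ε)/2))
        + (1+ε) * δ ^ (-2:ℝ) * (x^2+1) ^ (-((2+ε)/2)) := by ring

lemma aux_ptbound {δ ε : ℝ} (hδ : 0 < δ) (hδ1 : δ ≤ 1) (hε : 0 < ε) (x : ℝ) {t : ℝ}
    (ht : t ∈ Set.Icc δ 1) :
    ‖(t:ℂ)^(ε:ℂ) * ((x:ℂ) + t*I) ^ (-(1+(ε:ℂ))) - ((x:ℂ) + I) ^ (-(1+(ε:ℂ)))‖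
      ≤ ε * δ ^ (-2:ℝ) * (x^2+1) ^ (-((1+ε)/2)) + (1+ε) * δ ^ (-2:ℝ) * (x^2+1) ^ (-((2+ε)/2)) := by
  set G := ε * δ ^ (-2:ℝ) * (x^2+1) ^ (-((1+ε)/2)) + (1+ε) * δ ^ (-2:ℝ) * (x^2+1) ^ (-((2+ε)/2))
    with hG
  have hGnn : 0 ≤ G := by
    have : (0:ℝ) ≤ δ ^ (-2:ℝ) := Real.rpow_nonneg hδ.le _
    have h1 : (0:ℝ) ≤ (x^2+1) ^ (-((1+ε)/2)) := Real.rpow_nonneg (by positivity) _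
    have h2 : (0:ℝ) ≤ (x^2+1) ^ (-((2+ε)/2)) := Real.rpow_nonneg (by positivity) _
    positivity
  have key : ∀ s ∈ Set.Icc δ 1, HasDerivWithinAt
      (fun s : ℝ => (s:ℂ)^(ε:ℂ) * ((x:ℂ) + s*I) ^ (-(1+(ε:ℂ))))
      ((ε:ℂ) * (s:ℂ)^((ε:ℂ)-1) * 1 * ((x:ℂ) + s*I) ^ (-(1+(ε:ℂ)))
        + (s:ℂ)^(ε:ℂ) * (-(1+(ε:ℂ)) * ((x:ℂ) + s*I) ^ (-(1+(ε:ℂ))-1) * (1*I)))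
      (Set.Icc δ 1) s :=
    fun s hs => (aux_deriv x ε s (hδ.trans_le hs.1)).hasDerivWithinAt
  have bound : ∀ s ∈ Set.Icc δ 1,
      ‖(ε:ℂ) * (s:ℂ)^((ε:ℂ)-1) * 1 * ((x:ℂ) + s*I) ^ (-(1+(ε:ℂ)))
        + (s:ℂ)^(ε:ℂ) * (-(1+(ε:ℂ)) * ((x:ℂ) + s*I) ^ (-(1+(ε:ℂ))-1) * (1*I))‖ ≤ G :=
    fun s hs => aux_deriv_norm hε hδ hs.1 hs.2
  have mvt := (convex_Icc δ 1).norm_image_sub_le_of_norm_hasDerivWithin_le key bound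
    (Set.right_mem_Icc.2 hδ1) ht
  have hone : ((1:ℝ):ℂ)^(ε:ℂ) * ((x:ℂ) + ((1:ℝ):ℂ)*I) ^ (-(1+(ε:ℂ)))
      = ((x:ℂ) + I) ^ (-(1+(ε:ℂ))) := by
    norm_num
  rw [hone] at mvt
  refine mvt.trans ?_
  have : ‖t - 1‖ ≤ 1 := by
    rw [Real.norm_eq_abs, abs_le]
    constructor <;> [linarith [ht.1]; linarith [ht.2]]
  calc G * ‖t-1‖ ≤ G * 1 := mul_le_mul_of_nonneg_left this hGnn
    _ = G := mul_one G

lemma aux_mul_cpow {r : ℝ} (hr : 0 < r) {z : ℂ} (hz : z ≠ 0) (s : ℂ) :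
    ((r:ℂ) * z) ^ s = (r:ℂ) ^ s * z ^ s := by
  rw [Complex.cpow_def_of_ne_zero (mul_ne_zero (Complex.ofReal_ne_zero.2 hr.ne') hz),
      Complex.cpow_def_of_ne_zero (Complex.ofReal_ne_zero.2 hr.ne'),
      Complex.cpow_def_of_ne_zero hz, Complex.log_ofReal_mul hr hz, add_mul, Complex.exp_add,
      Complex.ofReal_log hr.le]

lemma aux_ne (x t : ℝ) (ht : 0 < t) : ((x:ℂ) + t*I) ≠ 0 := fun h =>
  ht.ne' (by simpa using congrArg Complex.im h)

lemma aux_ident (x t ε : ℝ) (ht : 0 < t) :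
    (((x/t : ℝ):ℂ) + I) ^ (-(1+(ε:ℂ)))
      = (t:ℂ) * ((t:ℂ)^(ε:ℂ) * ((x:ℂ) + t*I) ^ (-(1+(ε:ℂ)))) := by
  have hz := aux_ne x t ht
  have h1 : (((x/t:ℝ):ℂ) + I) = ((t⁻¹:ℝ):ℂ) * ((x:ℂ) + t*I) := by
    have : (t:ℂ) ≠ 0 := Complex.ofReal_ne_zero.2 ht.ne'
    push_cast
    field_simp
  rw [h1, aux_mul_cpow (inv_pos.2 ht) hz]
  have h2 : ((t⁻¹:ℝ):ℂ) = ((t:ℂ))⁻¹ := by push_cast; ring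
  have h3 : ((t:ℂ))⁻¹ ^ (-(1+(ε:ℂ))) = (t:ℂ) ^ (1+(ε:ℂ)) := by
    rw [Complex.inv_cpow _ _ (by
      rw [Complex.arg_ofReal_of_nonneg ht.le]; exact Real.pi_ne_zero.symm),
      ← Complex.cpow_neg, neg_neg]
  rw [h2, h3, Complex.cpow_add _ _ (Complex.ofReal_ne_zero.2 ht.ne'), Complex.cpow_one, mul_assoc]


lemma aux_alg {t φt a b : ℂ} (ht : t ≠ 0) : (φt / t) * (t * (a * b⁻¹)) = a / b * φt := by
  have h : φt / t * (t * (a * b⁻¹)) = (t / t) * (φt * (a * b⁻¹)) := by ring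
  rw [h, div_self ht, one_mul, div_eq_mul_inv]
  ring

/-- The Hausdorff operator `ℋ_φ f (x) = ∫₀^∞ f(x/t) φ(t)/t dt` acting on
complex-valued functions on `ℝ`. -/
noncomputable def hausdorffOpC (φ : ℝ → ℝ) (f : ℝ → ℂ) (x : ℝ) : ℂ :=
  ∫ t in Set.Ioi (0 : ℝ), (φ t / t) • f (x / t)

/-- for `φ ≥ 0` integrable and supported in `[δ,1]` and
`f_ε(x) := (x+i)^{-(1+ε)}`, one has
`ℋ_φ f_ε (x) = ∫_δ^1 t^ε/(x+ti)^{1+ε} φ(t) dt`, and `ℋ_φ f_ε − (∫₀^∞ φ) f_ε ∈ L¹(ℝ)`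
with the stated `L¹` bound. -/
theorem hausdorffOpC_f_eps
    (δ ε : ℝ) (hδ : 0 < δ) (hδ1 : δ ≤ 1) (hε : 0 < ε)
    (φ : ℝ → ℝ) (hφ : ∀ t, 0 ≤ φ t) (hφ1 : IntegrableOn φ (Set.Ioi 0))
    (hsupp : Function.support φ ⊆ Set.Icc δ 1) :
    (∀ x : ℝ, hausdorffOpC φ (fun v : ℝ => ((v : ℂ) + I) ^ (-(1 + (ε : ℂ)))) x
        = ∫ t in Set.Icc δ 1,
            ((t : ℂ) ^ (ε : ℂ) / ((x : ℂ) + (t : ℂ) * I) ^ (1 + (ε : ℂ))) * (φ t : ℂ)) ∧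
      Integrable (fun x : ℝ =>
        hausdorffOpC φ (fun v : ℝ => ((v : ℂ) + I) ^ (-(1 + (ε : ℂ)))) x
          - ((∫ t in Set.Ioi (0 : ℝ), φ t : ℝ) : ℂ) * ((x : ℂ) + I) ^ (-(1 + (ε : ℂ)))) ∧
      (∫ x : ℝ, ‖hausdorffOpC φ (fun v : ℝ => ((v : ℂ) + I) ^ (-(1 + (ε : ℂ)))) x
          - ((∫ t in Set.Ioi (0 : ℝ), φ t : ℝ) : ℂ) * ((x : ℂ) + I) ^ (-(1 + (ε : ℂ)))‖)
        ≤ (∫ t in Set.Icc δ 1, φ t) *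
            ∫ x : ℝ, (ε * δ ^ (-2 : ℤ) * (x ^ 2 + 1) ^ (-((1 + ε) / 2))
              + (1 + ε) * δ ^ (-2 : ℤ) * (x ^ 2 + 1) ^ (-((2 + ε) / 2))) := by
  have hsub : Set.Icc δ 1 ⊆ Set.Ioi (0:ℝ) := fun t ht => lt_of_lt_of_le hδ ht.1
  have hφ0 : ∀ t, t ∉ Set.Icc δ 1 → φ t = 0 := fun t ht =>
    Function.notMem_support.1 (fun h => ht (hsupp h))
  -- notation
  set f1 : ℝ → ℂ := fun x => ((x:ℂ) + I) ^ (-(1+(ε:ℂ))) with hf1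
  set g : ℝ → ℝ → ℂ := fun x t => (t:ℂ)^(ε:ℂ) * ((x:ℂ) + t*I) ^ (-(1+(ε:ℂ))) with hg
  set G : ℝ → ℝ := fun x => ε * δ ^ (-2 : ℤ) * (x ^ 2 + 1) ^ (-((1 + ε) / 2))
      + (1 + ε) * δ ^ (-2 : ℤ) * (x ^ 2 + 1) ^ (-((2 + ε) / 2)) with hGdef
  have hzr : (δ:ℝ) ^ (-2 : ℤ) = δ ^ (-2 : ℝ) := by
    rw [← Real.rpow_intCast δ (-2)]; norm_num
  have hGbound : ∀ x : ℝ, ∀ t ∈ Set.Icc δ 1, ‖g x t - f1 x‖ ≤ G x := by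
    intro x t ht
    have := aux_ptbound hδ hδ1 hε x ht
    rw [hGdef, hzr]
    exact this
  have hGnn : ∀ x, 0 ≤ G x := by
    intro x
    have h0 : (0:ℝ) ≤ δ ^ (-2 : ℤ) := by positivity
    have h1 : (0:ℝ) ≤ (x^2+1) ^ (-((1+ε)/2)) := Real.rpow_nonneg (by positivity) _
    have h2 : (0:ℝ) ≤ (x^2+1) ^ (-((2+ε)/2)) := Real.rpow_nonneg (by positivity) _
    rw [hGdef]; positivity
  -- part 1
  have part1 : ∀ x : ℝ, hausdorffOpC φ (fun v : ℝ => ((v : ℂ) + I) ^ (-(1 + (ε : ℂ)))) x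
      = ∫ t in Set.Icc δ 1,
          ((t : ℂ) ^ (ε : ℂ) / ((x : ℂ) + (t : ℂ) * I) ^ (1 + (ε : ℂ))) * (φ t : ℂ) := by
    intro x
    unfold hausdorffOpC
    rw [setIntegral_eq_of_subset_of_forall_diff_eq_zero measurableSet_Ioi hsub
      (fun t ht => by rw [hφ0 t ht.2]; simp)]
    apply setIntegral_congr_fun measurableSet_Icc
    intro t ht
    have ht0 : 0 < t := hδ.trans_le ht.1
    have htC : (t:ℂ) ≠ 0 := Complex.ofReal_ne_zero.2 ht0.ne'
    have hwC : ((x:ℂ) + t*I) ^ (1+(ε:ℂ)) = ((x:ℂ) + t*I) ^ (1+(ε:ℂ)) := rfl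
    show (φ t / t) • (((x/t : ℝ):ℂ) + I) ^ (-(1+(ε:ℂ))) = _
    rw [aux_ident x t ε ht0, Complex.real_smul, Complex.ofReal_div, Complex.cpow_neg]
    exact aux_alg htC
  refine ⟨part1, ?_⟩
  -- integrability data
  have hφI : IntegrableOn φ (Set.Icc δ 1) := hφ1.mono_set hsub
  have hφC : IntegrableOn (fun t => (φ t : ℂ)) (Set.Icc δ 1) := hφI.ofReal
  have hIoiφ : ∫ t in Set.Ioi (0:ℝ), φ t = ∫ t in Set.Icc δ 1, φ t :=
    setIntegral_eq_of_subset_of_forall_diff_eq_zero measurableSet_Ioi hsub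
      (fun t ht => hφ0 t ht.2)
  have hgcont : ∀ x, ContinuousOn (fun t : ℝ => g x t) (Set.Icc δ 1) := by
    intro x t ht
    have ht0 : 0 < t := hδ.trans_le ht.1
    have c1 : ContinuousAt (fun t : ℝ => (t:ℂ)^(ε:ℂ)) t :=
      (continuousAt_cpow_const (Or.inl (by simpa using ht0))).comp
        Complex.continuous_ofReal.continuousAt
    have c2 : ContinuousAt (fun t : ℝ => ((x:ℂ) + t*I) ^ (-(1+(ε:ℂ)))) t := by
      apply (continuousAt_cpow_const (Or.inr (by simpa using ht0.ne'))).comp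
      exact (continuous_const.add (Complex.continuous_ofReal.mul continuous_const)).continuousAt
    exact (c1.mul c2).continuousWithinAt
  have hF : ∀ x : ℝ, IntegrableOn (fun t => (g x t - f1 x) * (φ t : ℂ)) (Set.Icc δ 1) := by
    intro x
    have hb : ∀ᵐ t ∂(volume.restrict (Set.Icc δ 1)), ‖g x t - f1 x‖ ≤ G x :=
      (ae_restrict_iff' measurableSet_Icc).2 (ae_of_all _ (hGbound x))
    refine Integrable.bdd_mul hφC ?_ hb
    exact (((hgcont x).sub continuousOn_const).aestronglyMeasurable measurableSet_Icc)
  have hBint : ∀ x : ℝ, IntegrableOn (fun t => φ t • f1 x) (Set.Icc δ 1) := fun x =>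
    hφI.smul_const (f1 x)
  have hAint : ∀ x : ℝ, IntegrableOn
      (fun t : ℝ => ((t : ℂ) ^ (ε : ℂ) / ((x : ℂ) + (t : ℂ) * I) ^ (1 + (ε : ℂ))) * (φ t : ℂ))
      (Set.Icc δ 1) := by
    intro x
    apply Integrable.congr ((hF x).add (hBint x))
    refine (ae_restrict_iff' measurableSet_Icc).2 (ae_of_all _ fun t ht => ?_)
    simp only [Pi.add_apply, Complex.real_smul, hg, hf1, div_eq_mul_inv, Complex.cpow_neg]
    ring
  -- splitting
  have hsplit : ∀ x : ℝ, hausdorffOpC φ (fun v : ℝ => ((v : ℂ) + I) ^ (-(1 + (ε : ℂ)))) x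
      - ((∫ t in Set.Ioi (0 : ℝ), φ t : ℝ) : ℂ) * ((x : ℂ) + I) ^ (-(1 + (ε : ℂ)))
      = ∫ t in Set.Icc δ 1, (g x t - f1 x) * (φ t : ℂ) := by
    intro x
    rw [part1 x, hIoiφ]
    have h1 : ((∫ t in Set.Icc δ 1, φ t : ℝ):ℂ) * ((x : ℂ) + I) ^ (-(1 + (ε : ℂ)))
        = ∫ t in Set.Icc δ 1, φ t • f1 x := by
      rw [integral_smul_const, Complex.real_smul, hf1]
    rw [h1, ← integral_sub (hAint x) (hBint x)]
    apply setIntegral_congr_fun measurableSet_Icc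
    intro t ht
    simp only [Complex.real_smul, hg, hf1, div_eq_mul_inv, Complex.cpow_neg]
    ring
  -- norm bound pointwise in x
  have hKnn : 0 ≤ ∫ t in Set.Icc δ 1, φ t := setIntegral_nonneg measurableSet_Icc fun t _ => hφ t
  have hnorm : ∀ x : ℝ, ‖hausdorffOpC φ (fun v : ℝ => ((v : ℂ) + I) ^ (-(1 + (ε : ℂ)))) x
      - ((∫ t in Set.Ioi (0 : ℝ), φ t : ℝ) : ℂ) * ((x : ℂ) + I) ^ (-(1 + (ε : ℂ)))‖
      ≤ (∫ t in Set.Icc δ 1, φ t) * G x := by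
    intro x
    rw [hsplit x]
    refine (norm_integral_le_integral_norm _).trans ?_
    have step : ∫ t in Set.Icc δ 1, ‖(g x t - f1 x) * (φ t : ℂ)‖
        ≤ ∫ t in Set.Icc δ 1, G x * φ t := by
      apply setIntegral_mono_on (hF x).norm (hφI.const_mul (G x)) measurableSet_Icc
      intro t ht
      rw [norm_mul, Complex.norm_real, Real.norm_eq_abs, _root_.abs_of_nonneg (hφ t)]
      exact mul_le_mul_of_nonneg_right (hGbound x t ht) (hφ t)
    refine step.trans (le_of_eq ?_)
    rw [integral_const_mul]
    ring
  -- continuity of the difference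
  have hcontD : Continuous (fun x : ℝ => ∫ t in Set.Icc δ 1, (g x t - f1 x) * (φ t : ℂ)) := by
    apply continuous_of_dominated
      (bound := fun t => (ε * δ ^ (-2:ℝ) + (1+ε) * δ ^ (-2:ℝ)) * φ t)
    · intro x
      exact (hF x).aestronglyMeasurable
    · intro x
      refine (ae_restrict_iff' measurableSet_Icc).2 (ae_of_all _ fun t ht => ?_)
      rw [norm_mul, Complex.norm_real, Real.norm_eq_abs, _root_.abs_of_nonneg (hφ t)]
      apply mul_le_mul_of_nonneg_right _ (hφ t)
      refine (hGbound x t ht).trans ?_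
      rw [hGdef, hzr]
      have hp1 : (x^2+1 : ℝ) ^ (-((1+ε)/2)) ≤ 1 :=
        Real.rpow_le_one_of_one_le_of_nonpos (by nlinarith [sq_nonneg x]) (by linarith)
      have hp2 : (x^2+1 : ℝ) ^ (-((2+ε)/2)) ≤ 1 :=
        Real.rpow_le_one_of_one_le_of_nonpos (by nlinarith [sq_nonneg x]) (by linarith)
      have hd : (0:ℝ) ≤ δ ^ (-2:ℝ) := Real.rpow_nonneg hδ.le _
      have t1 : ε * δ ^ (-2:ℝ) * (x^2+1) ^ (-((1+ε)/2)) ≤ ε * δ ^ (-2:ℝ) * 1 := by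
        apply mul_le_mul_of_nonneg_left hp1 (by positivity)
      have t2 : (1+ε) * δ ^ (-2:ℝ) * (x^2+1) ^ (-((2+ε)/2)) ≤ (1+ε) * δ ^ (-2:ℝ) * 1 := by
        apply mul_le_mul_of_nonneg_left hp2 (by positivity)
      simp only [mul_one] at t1 t2
      linarith
    · exact hφI.const_mul _
    · refine (ae_restrict_iff' measurableSet_Icc).2 (ae_of_all _ fun t ht => ?_)
      have ht0 : 0 < t := hδ.trans_le ht.1
      have c2 : Continuous (fun x : ℝ => ((x:ℂ) + t*I) ^ (-(1+(ε:ℂ)))) := by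
        rw [continuous_iff_continuousAt]
        intro x
        apply (continuousAt_cpow_const (Or.inr (by simpa using ht0.ne'))).comp
        exact (Complex.continuous_ofReal.add continuous_const).continuousAt
      have c3 : Continuous (fun x : ℝ => f1 x) := by
        rw [continuous_iff_continuousAt]
        intro x
        apply (continuousAt_cpow_const (Or.inr (by norm_num))).comp
        exact (Complex.continuous_ofReal.add continuous_const).continuousAt
      exact (((continuous_const.mul c2).sub c3).mul continuous_const)
  -- integrability of G
  have hGint : Integrable G := by
    have i1 : Integrable (fun x : ℝ => (x^2+1) ^ (-((1+ε)/2))) := by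
      have h := integrable_rpow_neg_one_add_norm_sq (E := ℝ) (μ := volume) (r := 1+ε)
        (by simp; linarith)
      apply h.congr (ae_of_all _ fun x => ?_)
      simp only [Real.norm_eq_abs, _root_.sq_abs, neg_div]
      rw [add_comm (1:ℝ) (x^2)]
    have i2 : Integrable (fun x : ℝ => (x^2+1) ^ (-((2+ε)/2))) := by
      have h := integrable_rpow_neg_one_add_norm_sq (E := ℝ) (μ := volume) (r := 2+ε)
        (by simp; linarith)
      apply h.congr (ae_of_all _ fun x => ?_)
      simp only [Real.norm_eq_abs, _root_.sq_abs, neg_div]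
      rw [add_comm (1:ℝ) (x^2)]
    exact (i1.const_mul (ε * δ ^ (-2:ℤ))).add (i2.const_mul ((1+ε) * δ ^ (-2:ℤ)))
  -- integrability of the difference
  have hDint : Integrable (fun x : ℝ =>
      hausdorffOpC φ (fun v : ℝ => ((v : ℂ) + I) ^ (-(1 + (ε : ℂ)))) x
        - ((∫ t in Set.Ioi (0 : ℝ), φ t : ℝ) : ℂ) * ((x : ℂ) + I) ^ (-(1 + (ε : ℂ)))) := by
    refine Integrable.mono' (hGint.const_mul (∫ t in Set.Icc δ 1, φ t)) ?_
      (ae_of_all _ hnorm)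
    have : (fun x : ℝ => hausdorffOpC φ (fun v : ℝ => ((v : ℂ) + I) ^ (-(1 + (ε : ℂ)))) x
        - ((∫ t in Set.Ioi (0 : ℝ), φ t : ℝ) : ℂ) * ((x : ℂ) + I) ^ (-(1 + (ε : ℂ))))
        = fun x => ∫ t in Set.Icc δ 1, (g x t - f1 x) * (φ t : ℂ) := funext hsplit
    rw [this]
    exact hcontD.aestronglyMeasurable
  refine ⟨hDint, ?_⟩
  calc ∫ x : ℝ, ‖hausdorffOpC φ (fun v : ℝ => ((v : ℂ) + I) ^ (-(1 + (ε : ℂ)))) x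
          - ((∫ t in Set.Ioi (0 : ℝ), φ t : ℝ) : ℂ) * ((x : ℂ) + I) ^ (-(1 + (ε : ℂ)))‖
      ≤ ∫ x : ℝ, (∫ t in Set.Icc δ 1, φ t) * G x :=
        integral_mono hDint.norm (hGint.const_mul _) hnorm
    _ = (∫ t in Set.Icc δ 1, φ t) * ∫ x : ℝ, G x := integral_const_mul _ _
end
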